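/- arXiv:2304.11471 — 8 statements merged into one kernel-verified Lean document; each statement's English description precedes it below -/
import Mathlib

section
/- Let p be a prime number with p ≡ 3 (mod 4) and let e ≥ 2 be an integer. Then p^e divides u(n) for all integers n ≥ ⌊(e−1)p²/2⌋. -/
/-- `Π₁(N) = ∏_{j=1}^{N} (4j−1)²`. -/
def Pi1 (N : ℕ) : ℤ := ∏ j ∈ Finset.Icc 1 N, (4 * (j : ℤ) - 1) ^ 2

/-- `Π₃(N) = ∏_{j=1}^{N} (4j−3)²`. -/
def Pi3 (N : ℕ) : ℤ := ∏ j ∈ Finset.Icc 1 N, (4 * (j : ℤ) - 3) ^ 2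

/-!
Write `p = 4w − 1`. The factors of `Π₁(n)` divisible by `p` are those with `j ≡ w (mod p)`,
those of `Π₃(k)` those with `j ≡ 3w (mod p)`, and each contributes `p²`. Kummer's theorem
bounds `v_p C(2n+1, 2m+1)` below by the carries at the first two base-`p` digits. These three
estimates drive a strong induction on the recurrence proving `v_p (u n) ≥ uExponent p (2n+1)`,
which is `⌊(2n+1)/p²⌋ + 1 ≥ e` once `n ≥ ⌊(e−1)p²/2⌋`.
-/

open Finset

theorem Finset.pow_card_dvd_prod_of_subset {ι M : Type*} [CommMonoid M] {s t : Finset ι}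
    {f : ι → M} {a : M} (hts : t ⊆ s) (ha : ∀ i ∈ t, a ∣ f i) : a ^ #t ∣ ∏ i ∈ s, f i := by
  rw [← prod_const]
  exact (prod_dvd_prod_of_dvd _ _ ha).trans (prod_dvd_prod_of_subset _ _ _ hts)

theorem pow_dvd_prod_Icc_sq {p j₀ s k : ℕ} {a c : ℤ} (hp : 0 < p) (hj₀ : 1 ≤ j₀)
    (h₀ : (p : ℤ) ∣ a * j₀ - c) (hk : j₀ + s * p ≤ k) :
    (p : ℤ) ^ (2 * (s + 1)) ∣ ∏ j ∈ Icc 1 k, (a * j - c) ^ 2 := by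
  have hinj : Set.InjOn (fun i => j₀ + i * p) (range (s + 1)) := fun i _ i' _ h => by
    simpa [hp.ne'] using h
  have hsub : (range (s + 1)).image (fun i => j₀ + i * p) ⊆ Icc 1 k := by
    simp only [subset_iff, mem_image, mem_range, mem_Icc]
    rintro _ ⟨i, hi, rfl⟩
    exact ⟨by omega, by nlinarith⟩
  have hdvd : ∀ j ∈ (range (s + 1)).image (fun i => j₀ + i * p),
      (p : ℤ) ^ 2 ∣ (a * j - c) ^ 2 := by
    simp only [mem_image]
    rintro _ ⟨i, -, rfl⟩
    refine pow_dvd_pow_of_dvd ?_ 2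
    have : a * ((j₀ + i * p : ℕ) : ℤ) - c = (a * j₀ - c) + a * i * p := by push_cast; ring
    rw [this]
    exact dvd_add h₀ (dvd_mul_left _ _)
  have := pow_card_dvd_prod_of_subset hsub hdvd
  rwa [card_image_of_injOn hinj, card_range, ← pow_mul] at this

section

variable {p w : ℕ}

theorem pow_dvd_Pi1 (hw : 4 * w = p + 1) {s n : ℕ} (hn : w + s * p ≤ n) :
    (p : ℤ) ^ (2 * (s + 1)) ∣ Pi1 n :=
  pow_dvd_prod_Icc_sq (by omega) (by omega) ⟨1, by omega⟩ hn

theorem pow_dvd_Pi3 (hw : 4 * w = p + 1) {s k : ℕ} (hk : 3 * w + s * p ≤ k) :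
    (p : ℤ) ^ (2 * (s + 1)) ∣ Pi3 k :=
  pow_dvd_prod_Icc_sq (by omega) (by omega) ⟨3, by omega⟩ hk

theorem three_mul_add_div_two_mul_le (hw : 4 * w = p + 1) {q n : ℕ} (hq : 1 ≤ q)
    (h : q * p ^ 2 ≤ 2 * n + 1) : 3 * w + q / 2 * p ≤ n := by
  have hp : 3 ≤ p := by omega
  obtain ⟨r, hr, hq'⟩ : ∃ r, r ≤ 1 ∧ q = 2 * (q / 2) + r := ⟨q % 2, by omega, by omega⟩
  rw [hq'] at h hq
  nlinarith

end

/-- The exponent of `p` carried through the induction for `u n`, as a function of `N = 2n+1`. -/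
def uExponent (p N : ℕ) : ℕ :=
  if N < p ^ 2 then (if N % p < N / p then 1 else 0) else N / p ^ 2 + 1

/-- `3(p+1)/4` is the least `j ≥ 1` with `p ∣ 4j − 3` when `p ≡ 3 (mod 4)`. -/
def pi3Exponent (p k : ℕ) : ℕ :=
  if 3 * (p + 1) ≤ 4 * k then max 2 (2 * k / p ^ 2 + 1) else 0

def carry (q x y : ℕ) : ℕ :=
  if q ≤ x % q + y % q then 1 else 0

theorem carry_le_one (q x y : ℕ) : carry q x y ≤ 1 := by
  unfold carry; split_ifs <;> omega

theorem pow_carry_add_carry_dvd_choose {p : ℕ} (hp : p.Prime) (x y : ℕ) :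
    p ^ (carry p x y + carry (p ^ 2) x y) ∣ (x + y).choose x := by
  have := Fact.mk hp
  have hlog : Nat.log p (y + x) < y + x + 3 := (Nat.log_le_self p _).trans_lt (by omega)
  rw [add_comm x y]
  refine (pow_dvd_pow p ?_).trans pow_padicValNat_dvd
  rw [padicValNat_choose' hlog]
  calc carry p x y + carry (p ^ 2) x y
      _ = #{i ∈ {1, 2} | p ^ i ≤ x % p ^ i + y % p ^ i} := by
        rw [card_filter, sum_pair (by norm_num), pow_one]; rfl
      _ ≤ _ := card_le_card (filter_subset_filter _ (by intro i; simp; omega))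

theorem two_le_pi3Exponent {p k : ℕ} (hk : 3 * (p + 1) ≤ 4 * k) : 2 ≤ pi3Exponent p k := by
  rw [pi3Exponent, if_pos hk]
  exact le_max_left _ _

section

variable {p : ℕ} (hp₃ : 3 ≤ p)
include hp₃

theorem div_add_one_le_pi3Exponent {k : ℕ} (hk : p ^ 2 ≤ 2 * k) :
    2 * k / p ^ 2 + 1 ≤ pi3Exponent p k := by
  rw [pi3Exponent, if_pos (by nlinarith)]
  exact le_max_right _ _

theorem div_le_pi3Exponent (k : ℕ) : 2 * k / p ^ 2 ≤ pi3Exponent p k := by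
  rcases le_or_gt (p ^ 2) (2 * k) with hk | hk
  · exact (div_add_one_le_pi3Exponent hp₃ hk).trans' (Nat.le_succ _)
  · simp [Nat.div_eq_of_lt hk]

theorem two_mul_div_le_one {k : ℕ} (hk : ¬3 * (p + 1) ≤ 4 * k) : 2 * k / p ≤ 1 :=
  Nat.lt_succ_iff.1 ((Nat.div_lt_iff_lt_mul (by omega)).2 (by omega))

end

section

variable {p X k : ℕ} (hp₃ : 3 ≤ p)
include hp₃

theorem uExponent_add_le_of_lt (hp₂ : p % 2 = 1) (hN : X + 2 * k < p ^ 2) :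
    uExponent p (X + 2 * k) ≤
      carry p X (2 * k) + carry (p ^ 2) X (2 * k) + pi3Exponent p k + uExponent p X := by
  rw [uExponent, if_pos hN]
  split_ifs with hNdig
  swap; · omega
  by_cases hk : 3 * (p + 1) ≤ 4 * k
  · have := two_le_pi3Exponent hk; omega
  have hY := two_mul_div_le_one hp₃ hk
  by_cases hc : p ≤ X % p + 2 * k % p
  · have : carry p X (2 * k) = 1 := if_pos hc
    omega
  have hdiv : (X + 2 * k) / p = X / p + 2 * k / p :=
    Nat.add_div_eq_of_add_mod_lt (not_le.1 hc)
  have hmod : (X + 2 * k) % p = X % p + 2 * k % p := Nat.add_mod_of_add_mod_lt (not_le.1 hc)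
  rw [uExponent, if_pos (by omega)]
  split_ifs with hXdig
  · omega
  -- otherwise `2k` would have the digits `(1, 0)`, i.e. `2k = p`, which is odd
  have h1 : 2 * k / p = 1 := by omega
  have h0 : 2 * k % p = 0 := by omega
  have := Nat.div_add_mod (2 * k) p
  rw [h1, h0] at this
  omega

theorem uExponent_add_le_of_le (hp₂ : p % 2 = 1) (hX : X % 2 = 1) (hN : p ^ 2 ≤ X + 2 * k) :
    uExponent p (X + 2 * k) ≤
      carry p X (2 * k) + carry (p ^ 2) X (2 * k) + pi3Exponent p k + uExponent p X := by
  have hp : 0 < p := by omega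
  have hdiv₂ : (X + 2 * k) / p ^ 2 = X / p ^ 2 + 2 * k / p ^ 2 + carry (p ^ 2) X (2 * k) :=
    Nat.add_div (by positivity)
  have hc₂ := carry_le_one (p ^ 2) X (2 * k)
  rw [uExponent, if_neg (not_lt.2 hN)]
  by_cases hXbig : p ^ 2 ≤ X
  · rw [uExponent, if_neg (not_lt.2 hXbig)]
    have := div_le_pi3Exponent hp₃ k
    omega
  have hX₀ : X / p ^ 2 = 0 := Nat.div_eq_of_lt (not_le.1 hXbig)
  by_cases hYbig : p ^ 2 ≤ 2 * k
  · have := div_add_one_le_pi3Exponent hp₃ hYbig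
    omega
  have hY₀ : 2 * k / p ^ 2 = 0 := Nat.div_eq_of_lt (not_le.1 hYbig)
  by_cases hk : 3 * (p + 1) ≤ 4 * k
  · have := two_le_pi3Exponent hk
    omega
  have hY := two_mul_div_le_one hp₃ hk
  by_cases hc : p ≤ X % p + 2 * k % p
  · have : carry p X (2 * k) = 1 := if_pos hc
    omega
  -- no carry at `p` forces the digits `X/p = p - 1` and `2k/p = 1`
  have hdiv : (X + 2 * k) / p = X / p + 2 * k / p :=
    Nat.add_div_eq_of_add_mod_lt (not_le.1 hc)
  have hNp : p ≤ (X + 2 * k) / p := (Nat.le_div_iff_mul_le hp).2 (by rwa [← sq])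
  have hXp : X / p < p := Nat.div_lt_of_lt_mul (by rw [← sq]; omega)
  have hXdig : X / p = p - 1 := by omega
  -- `X = p(p-1) + X % p` with `p(p-1)` even, so the odd digit `X % p` is not `p - 1`
  have hXmod : X % p < p - 1 := by
    have := Nat.div_add_mod X p
    have := (Nat.even_mul_pred_self p).two_dvd
    rw [hXdig] at *
    omega
  rw [uExponent, if_pos (not_le.1 hXbig), if_pos (by omega)]
  omega

theorem uExponent_add_le (hp₂ : p % 2 = 1) (hX : X % 2 = 1) :
    uExponent p (X + 2 * k) ≤
      carry p X (2 * k) + carry (p ^ 2) X (2 * k) + pi3Exponent p k + uExponent p X :=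
  (lt_or_ge _ _).elim (uExponent_add_le_of_lt hp₃ hp₂) (uExponent_add_le_of_le hp₃ hp₂ hX)

end

theorem pow_uExponent_dvd_Pi1 {p : ℕ} (hp : p % 4 = 3) (n : ℕ) :
    (p : ℤ) ^ uExponent p (2 * n + 1) ∣ Pi1 n := by
  have hw : 4 * ((p + 1) / 4) = p + 1 := by omega
  unfold uExponent
  split_ifs with hsmall hdig
  · have : p ≤ 2 * n + 1 := by
      by_contra! h
      simp [Nat.div_eq_of_lt h] at hdig
    exact (pow_dvd_pow _ (by omega)).trans (pow_dvd_Pi1 hw (s := 0) (by omega))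
  · simp
  · have hq : 1 ≤ (2 * n + 1) / p ^ 2 :=
      (Nat.one_le_div_iff (pow_pos (by omega) 2)).2 (not_lt.1 hsmall)
    have := three_mul_add_div_two_mul_le hw hq (Nat.div_mul_le_self _ _)
    exact (pow_dvd_pow _ (by omega)).trans
      (pow_dvd_Pi1 hw (s := (2 * n + 1) / p ^ 2 / 2) (by omega))

theorem pow_pi3Exponent_dvd_Pi3 {p : ℕ} (hp : p % 4 = 3) (k : ℕ) :
    (p : ℤ) ^ pi3Exponent p k ∣ Pi3 k := by
  have hw : 4 * ((p + 1) / 4) = p + 1 := by omega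
  unfold pi3Exponent
  split_ifs with hk
  · rcases max_cases 2 (2 * k / p ^ 2 + 1) with ⟨h, -⟩ | ⟨h, hlt⟩ <;> rw [h]
    · exact pow_dvd_Pi3 hw (s := 0) (by omega)
    · have hq : 1 ≤ 2 * k / p ^ 2 := by omega
      have := three_mul_add_div_two_mul_le hw hq
        ((Nat.div_mul_le_self (2 * k) (p ^ 2)).trans (Nat.le_succ _))
      exact (pow_dvd_pow _ (by omega)).trans (pow_dvd_Pi3 hw this)
  · simp

theorem pow_uExponent_dvd_summand {p : ℕ} (hp : p.Prime) (hp₄ : p % 4 = 3) {m n : ℕ}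
    (hmn : m < n) {c : ℤ} (hc : (p : ℤ) ^ uExponent p (2 * m + 1) ∣ c) :
    (p : ℤ) ^ uExponent p (2 * n + 1) ∣
      ((2 * n + 1).choose (2 * m + 1) : ℤ) * Pi3 (n - m) * c := by
  have hN : 2 * n + 1 = 2 * m + 1 + 2 * (n - m) := by omega
  have hchoose : (p : ℤ) ^ (carry p (2 * m + 1) (2 * (n - m)) + carry (p ^ 2) (2 * m + 1)
      (2 * (n - m))) ∣ ((2 * m + 1 + 2 * (n - m)).choose (2 * m + 1) : ℤ) := by
    exact_mod_cast pow_carry_add_carry_dvd_choose hp _ _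
  rw [hN]
  refine (pow_dvd_pow _ (uExponent_add_le (by omega) (by omega) (by omega))).trans ?_
  rw [pow_add, pow_add]
  exact mul_dvd_mul (mul_dvd_mul hchoose (pow_pi3Exponent_dvd_Pi3 hp₄ _)) hc

theorem pow_uExponent_dvd_of_recurrence {p : ℕ} (hp : p.Prime) (hp₄ : p % 4 = 3) {u : ℕ → ℤ}
    (hu0 : u 0 = 1)
    (hu : ∀ n : ℕ, 1 ≤ n →
      u n = Pi1 n - ∑ m ∈ range n, ((2 * n + 1).choose (2 * m + 1) : ℤ) * Pi3 (n - m) * u m)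
    (n : ℕ) : (p : ℤ) ^ uExponent p (2 * n + 1) ∣ u n := by
  induction n using Nat.strong_induction_on with
  | _ n ih =>
    rcases Nat.eq_zero_or_pos n with rfl | hn
    · have : uExponent p 1 = 0 := by
        simp [uExponent, Nat.mod_eq_of_lt hp.one_lt, Nat.div_eq_of_lt hp.one_lt, hp.one_lt]
      simp [hu0, this]
    rw [hu n hn]
    exact dvd_sub (pow_uExponent_dvd_Pi1 hp₄ n) <| dvd_sum fun m hm =>
      pow_uExponent_dvd_summand hp hp₄ (mem_range.1 hm) (ih m (mem_range.1 hm))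

theorem le_uExponent {p e N : ℕ} (hp : 0 < p) (he : 2 ≤ e) (hN : (e - 1) * p ^ 2 ≤ N) :
    e ≤ uExponent p N := by
  have hpN : p ^ 2 ≤ N := (Nat.le_mul_of_pos_left _ (by omega)).trans hN
  rw [uExponent, if_neg (not_lt.2 hpN)]
  have := (Nat.le_div_iff_mul_le (pow_pos hp 2)).2 hN
  omega

theorem romik_u_vanishes_mod_p_pow
    (p : ℕ) (hp : p.Prime) (hp3 : p % 4 = 3) (e : ℕ) (he : 2 ≤ e)
    (u : ℕ → ℤ)
    (hu0 : u 0 = 1)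
    (hu : ∀ n : ℕ, 1 ≤ n →
      u n = Pi1 n - ∑ m ∈ Finset.range n,
        ((2 * n + 1).choose (2 * m + 1) : ℤ) * Pi3 (n - m) * u m) :
    ∀ n : ℕ, (e - 1) * p ^ 2 / 2 ≤ n → (p : ℤ) ^ e ∣ u n := by
  intro n hn
  have hN : (e - 1) * p ^ 2 ≤ 2 * n + 1 := by omega
  exact (pow_dvd_pow _ (le_uExponent hp.pos he hN)).trans
    (pow_uExponent_dvd_of_recurrence hp hp3 hu0 hu n)
end

section
/- Let p be a prime number with p ≡ 1 (mod 4). Then: (1) for every positive integer e, p^e divides u(n) for all integers n ≥ ⌈ep/2⌉; (2) p does not divide u((p−1)/2), and u((p−1)/2) is a quadratic residue modulo p, i.e., there exists an integer x with u((p−1)/2) ≡ x² (mod p). -/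
/-!
Let `F`, `G`, `W` be the exponential generating functions of `Π₃(m)` placed at `x^(2m)`, of
`Π₁(m)` at `x^(2m+1)` and of `u(m)` at `x^(2m+1)`. Since `Π₃` and `Π₁` grow by the factors
`(4m+1)²` and `(4m+3)²`, both `F` and `G` solve `(1 - 4x²) y'' = 8x y' + y`, so their Wronskian
satisfies `(1 - 4x²)(F G' - G F') = 1`; the recurrence for `u` says exactly that `G = W F`.
Hence `(1 - 4x²) F² W' = 1`.

For `p ≡ 1 mod 4`, Legendre's formula gives `v_p((2m)!) ≤ v_p(Π₃(m))`: the coefficients of `F`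
are `p`-adic integers. Then so are those of `W' = ((1 - 4x²) F²)⁻¹`, i.e.
`p ^ v_p((2n)!) ∣ u(n)`, and `v_p((2n)!) ≥ e` once `2n ≥ e p`.

Modulo `p` every `C(p, 2m+1)` with `2m+1 < p` vanishes, so `u((p-1)/2) ≡ Π₁((p-1)/2)`, which is
a square whose factors `4j - 1 < 2p` are all prime to `p`.
-/

open PowerSeries Finset Nat

lemma Pi3_succ (n : ℕ) : Pi3 (n + 1) = (4 * n + 1) ^ 2 * Pi3 n := by
  rw [Pi3, Pi3, prod_Icc_succ_top (by omega)]
  push_cast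
  ring

lemma Pi1_succ (n : ℕ) : Pi1 (n + 1) = (4 * n + 3) ^ 2 * Pi1 n := by
  rw [Pi1, Pi1, prod_Icc_succ_top (by omega)]
  push_cast
  ring

lemma Pi3_eq_sq (m : ℕ) : Pi3 m = ((∏ j ∈ Icc 1 m, (4 * j - 3) : ℕ) : ℤ) ^ 2 := by
  rw [Pi3, Nat.cast_prod, ← prod_pow]
  refine prod_congr rfl fun j hj => ?_
  rw [Nat.cast_sub (by simp at hj; omega)]
  push_cast
  rfl

lemma Pi1_eq_sq (m : ℕ) : Pi1 m = (∏ j ∈ Icc 1 m, (4 * (j : ℤ) - 1)) ^ 2 := by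
  rw [Pi1, prod_pow]

lemma not_dvd_Pi1 {p n : ℕ} (hp : p.Prime) (hp4 : p % 4 = 1) (hn : 2 * n ≤ p) :
    ¬ (p : ℤ) ∣ Pi1 n := by
  have hpZ : Prime (p : ℤ) := Nat.prime_iff_prime_int.mp hp
  rw [Pi1_eq_sq]
  intro h
  obtain ⟨j, hj, hdvd⟩ := (hpZ.dvd_finsetProd_iff _).mp (hpZ.dvd_of_dvd_pow h)
  simp only [mem_Icc] at hj
  rw [show 4 * (j : ℤ) - 1 = ((4 * j - 1 : ℕ) : ℤ) by omega, Int.natCast_dvd_natCast] at hdvd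
  -- `0 < 4 * j - 1 < 2 * p`, so `4 * j - 1 = p`, which is `3` mod `4`
  have := Nat.eq_of_dvd_of_lt_two_mul (by omega) hdvd (by omega)
  omega

lemma div_le_two_mul_card_filter_dvd {q : ℕ} (hq : q % 4 = 1) (hq1 : 1 < q) (m : ℕ) :
    2 * m / q ≤ 2 * #{j ∈ Icc 1 m | q ∣ 4 * j - 3} := by
  -- `t ↦ (q + 3) / 4 + t * q` hits the `j` with `4 * j - 3 = (4 * t + 1) * q`
  suffices (2 * m / q + 1) / 2 ≤ #{j ∈ Icc 1 m | q ∣ 4 * j - 3} by omega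
  rw [← card_range ((2 * m / q + 1) / 2)]
  refine card_le_card_of_injOn (fun t => (q + 3) / 4 + t * q) (fun t ht => ?_) ?_
  · have ht : (2 * t + 1) * q ≤ 2 * m :=
      (Nat.mul_le_mul_right q (by simp at ht; omega)).trans (Nat.div_mul_le_self _ _)
    have hexp : (2 * t + 1) * q = 2 * (t * q) + q := by ring
    have hexp' : q * (4 * t + 1) = 4 * (t * q) + q := by ring
    refine mem_filter.mpr ⟨mem_Icc.mpr ⟨?_, ?_⟩, 4 * t + 1, ?_⟩ <;> beta_reduce <;> omega
  · intro t₁ _ t₂ _ h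
    exact Nat.eq_of_mul_eq_mul_right (by omega : 0 < q) (by beta_reduce at h; omega)

lemma factorization_factorial_two_mul_le {p : ℕ} (hp : p.Prime) (hp4 : p % 4 = 1) (m : ℕ) :
    (2 * m)!.factorization p ≤ 2 * (∏ j ∈ Icc 1 m, (4 * j - 3)).factorization p := by
  have hb : ∀ n ≤ 4 * m, n < p ^ (4 * m + 1) := fun n hn =>
    (show n < 4 * m + 1 by omega).trans (Nat.lt_pow_self hp.one_lt)
  rw [factorization_factorial hp (log_lt_of_lt_pow' (by omega) (hb _ (by omega))),
    factorization_prod (fun j hj => by simp at hj; omega), Finsupp.coe_finsetSum, Finset.sum_apply]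
  calc ∑ i ∈ Ico 1 (4 * m + 1), 2 * m / p ^ i
      ≤ ∑ i ∈ Ico 1 (4 * m + 1), 2 * #{j ∈ Icc 1 m | p ^ i ∣ 4 * j - 3} := by
        refine sum_le_sum fun i hi => div_le_two_mul_card_filter_dvd ?_ ?_ m
        · simp [Nat.pow_mod, hp4]
        · exact Nat.one_lt_pow (by simp at hi; omega) hp.one_lt
    _ = 2 * ∑ j ∈ Icc 1 m, #{i ∈ Ico 1 (4 * m + 1) | p ^ i ∣ 4 * j - 3} := by
        rw [← mul_sum]
        congr 1
        exact (sum_card_bipartiteAbove_eq_sum_card_bipartiteBelow _).symm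
    _ = 2 * ∑ j ∈ Icc 1 m, (4 * j - 3).factorization p := by
        congr 1
        refine sum_congr rfl fun j hj => ?_
        simp only [mem_Icc] at hj
        rw [factorization_eq_card_pow_dvd_of_lt hp (by omega) (hb _ (by omega))]

lemma pow_padicValNat_factorial_dvd_Pi3 {p : ℕ} [hp : Fact p.Prime] (hp4 : p % 4 = 1) (m : ℕ) :
    (p : ℤ) ^ padicValNat p (2 * m)! ∣ Pi3 m := by
  rw [Pi3_eq_sq, ← factorization_def _ hp.out]
  have h := (pow_dvd_pow p (factorization_factorial_two_mul_le hp.out hp4 m)).trans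
    (pow_mul' p 2 _ ▸ pow_dvd_pow_of_dvd (ordProj_dvd _ p) 2)
  exact_mod_cast h

lemma le_padicValNat_factorial {p e n : ℕ} [Fact p.Prime] (h : e * p ≤ n) :
    e ≤ padicValNat p n ! := by
  have hpe : p ^ e ∣ (p * e)! :=
    (padicValNat_dvd_iff_le (factorial_ne_zero _)).mpr (by rw [padicValNat_factorial_mul]; omega)
  exact (padicValNat_dvd_iff_le (factorial_ne_zero n)).mp
    (hpe.trans (factorial_dvd_factorial (by linarith)))

namespace PowerSeries

variable {S : Type*} [CommRing S] {T : Subring S}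

lemma mem_range_map_subtype_iff {f : S⟦X⟧} :
    f ∈ (map T.subtype).range ↔ ∀ n, coeff n f ∈ T := by
  refine ⟨?_, fun hf => ⟨mk fun n => ⟨coeff n f, hf n⟩, by ext n; simp⟩⟩
  rintro ⟨g, rfl⟩ n
  simp

lemma mem_range_map_subtype_of_mul_eq_one {f g : S⟦X⟧} (hf : f ∈ (map T.subtype).range)
    (hf0 : constantCoeff f = 1) (hfg : f * g = 1) : g ∈ (map T.subtype).range := by
  obtain ⟨f, rfl⟩ := hf
  have hf1 : constantCoeff f = 1 := by
    rw [← coeff_zero_eq_constantCoeff_apply, coeff_map, Subring.subtype_apply] at hf0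
    rw [← coeff_zero_eq_constantCoeff_apply]
    exact_mod_cast hf0
  obtain ⟨v, rfl⟩ := isUnit_iff_constantCoeff.mpr (hf1 ▸ isUnit_one)
  refine ⟨↑v⁻¹, ?_⟩
  calc map T.subtype ↑v⁻¹ = map T.subtype ↑v⁻¹ * (map T.subtype ↑v * g) := by rw [hfg, mul_one]
    _ = g := by rw [← mul_assoc, ← map_mul, Units.inv_mul, map_one, one_mul]

end PowerSeries

def SolvesODE {R : Type*} [CommRing R] (F : R⟦X⟧) : Prop :=
  (1 - 4 * X ^ 2) * d⁄dX R (d⁄dX R F) = 8 * X * d⁄dX R F + F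

lemma SolvesODE.wronskian {R : Type*} [CommRing R] [IsAddTorsionFree R] {F G : R⟦X⟧}
    (hF : SolvesODE F) (hG : SolvesODE G) :
    (1 - 4 * X ^ 2) * (F * d⁄dX R G - G * d⁄dX R F) =
      C (constantCoeff F * constantCoeff (d⁄dX R G) -
        constantCoeff G * constantCoeff (d⁄dX R F)) := by
  apply derivative.ext
  · have h4 : d⁄dX R (4 : R⟦X⟧) = 0 := by rw [← map_ofNat C 4, derivative_C]
    simp only [derivative_C, Derivation.leibniz, Derivation.leibniz_pow, map_sub,
      Derivation.map_one_eq_zero, derivative_X, h4, smul_eq_mul, nsmul_eq_mul]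
    unfold SolvesODE at hF hG
    linear_combination F * hG - G * hF
  · simp

section Egf

variable {K : Type*} [Field K]

def egf (a : ℕ → ℤ) : K⟦X⟧ := mk fun k => (a k : K) / k !

@[simp]
lemma coeff_egf (a : ℕ → ℤ) (k : ℕ) : coeff k (egf a : K⟦X⟧) = (a k : K) / k ! :=
  coeff_mk k _

@[simp]
lemma constantCoeff_egf (a : ℕ → ℤ) : constantCoeff (egf a : K⟦X⟧) = a 0 := by
  simp [← coeff_zero_eq_constantCoeff_apply]

variable [CharZero K]

lemma egf_mul (a b : ℕ → ℤ) :
    (egf a * egf b : K⟦X⟧) =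
      egf fun n => ∑ i ∈ range (n + 1), (n.choose i : ℤ) * a i * b (n - i) := by
  ext n
  rw [coeff_mul, Nat.sum_antidiagonal_eq_sum_range_succ_mk, coeff_egf, Int.cast_sum, sum_div]
  refine sum_congr rfl fun i hi => ?_
  have hin : i ≤ n := Nat.lt_succ_iff.mp (mem_range.mp hi)
  simp only [coeff_egf, Int.cast_mul, Int.cast_natCast, Nat.cast_choose K hin]
  field_simp [n.factorial_ne_zero]

lemma derivative_egf (a : ℕ → ℤ) :
    d⁄dX K (egf a) = egf fun k => a (k + 1) := by
  ext k
  rw [coeff_derivative, coeff_egf, coeff_egf, factorial_succ]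
  push_cast
  field_simp

lemma X_mul_derivative_egf (a : ℕ → ℤ) :
    X * d⁄dX K (egf a) = egf fun k => k * a k := by
  ext (_ | k)
  · simp
  · rw [coeff_succ_X_mul, derivative_egf, coeff_egf, coeff_egf, factorial_succ]
    push_cast
    field_simp

lemma solvesODE_egf {a : ℕ → ℤ} (ha : ∀ k, a (k + 2) = (2 * k + 1) ^ 2 * a k) :
    SolvesODE (egf a : K⟦X⟧) := by
  -- in terms of the Euler operator `θ = X * d⁄dX`, `X ^ 2 * d⁄dX (d⁄dX F) = θ (θ F) - θ F`
  have hEuler : X * d⁄dX K (X * d⁄dX K (egf a)) =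
      X * d⁄dX K (egf a) + X ^ 2 * d⁄dX K (d⁄dX K (egf a)) := by
    rw [Derivation.leibniz, derivative_X, smul_eq_mul, smul_eq_mul]
    ring
  have hcoeff : d⁄dX K (d⁄dX K (egf a)) - C 4 * (X * d⁄dX K (X * d⁄dX K (egf a))) -
      C 4 * (X * d⁄dX K (egf a)) - egf a = 0 := by
    rw [X_mul_derivative_egf, X_mul_derivative_egf, derivative_egf, derivative_egf]
    ext k
    simp only [map_sub, coeff_C_mul, coeff_egf, ha, map_zero]
    push_cast
    ring
  rw [map_ofNat] at hcoeff
  unfold SolvesODE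
  linear_combination hcoeff + 4 * hEuler

end Egf

section Spread

lemma sum_range_two_mul {M : Type*} [AddCommMonoid M] (f : ℕ → M) (n : ℕ) :
    ∑ i ∈ range (2 * n), f i = ∑ m ∈ range n, (f (2 * m) + f (2 * m + 1)) := by
  induction n with
  | zero => simp
  | succ n ih => rw [mul_succ, sum_range_succ, sum_range_succ, sum_range_succ, ih, add_assoc]

def evenSpread (f : ℕ → ℤ) (k : ℕ) : ℤ := if Even k then f (k / 2) else 0

def oddSpread (f : ℕ → ℤ) (k : ℕ) : ℤ := if Even k then 0 else f (k / 2)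

variable (f : ℕ → ℤ) (m : ℕ)

@[simp] lemma evenSpread_two_mul : evenSpread f (2 * m) = f m := by simp [evenSpread]

@[simp] lemma evenSpread_two_mul_add_one : evenSpread f (2 * m + 1) = 0 := by simp [evenSpread]

@[simp] lemma oddSpread_two_mul : oddSpread f (2 * m) = 0 := by simp [oddSpread]

@[simp] lemma oddSpread_two_mul_add_one : oddSpread f (2 * m + 1) = f m := by
  simp [oddSpread, show (2 * m + 1) / 2 = m by omega]

lemma oddSpread_succ (k : ℕ) : oddSpread f (k + 1) = evenSpread f k := by
  obtain ⟨m, rfl | rfl⟩ := k.even_or_odd'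
  · simp
  · simp [show 2 * m + 1 + 1 = 2 * (m + 1) by ring]

end Spread

lemma evenSpread_Pi3_add_two (k : ℕ) :
    evenSpread Pi3 (k + 2) = (2 * k + 1) ^ 2 * evenSpread Pi3 k := by
  obtain ⟨m, rfl | rfl⟩ := k.even_or_odd'
  · rw [show 2 * m + 2 = 2 * (m + 1) by ring, evenSpread_two_mul, evenSpread_two_mul, Pi3_succ]
    push_cast
    ring
  · simp [show 2 * m + 1 + 2 = 2 * (m + 1) + 1 by ring]

lemma oddSpread_Pi1_add_two (k : ℕ) :
    oddSpread Pi1 (k + 2) = (2 * k + 1) ^ 2 * oddSpread Pi1 k := by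
  obtain ⟨m, rfl | rfl⟩ := k.even_or_odd'
  · simp [show 2 * m + 2 = 2 * (m + 1) by ring]
  · rw [show 2 * m + 1 + 2 = 2 * (m + 1) + 1 by ring, oddSpread_two_mul_add_one,
      oddSpread_two_mul_add_one, Pi1_succ]
    push_cast
    ring

lemma egf_oddSpread_eq_mul {K : Type*} [Field K] [CharZero K] {f g h : ℕ → ℤ}
    (hfgh : ∀ n, ∑ m ∈ range (n + 1),
      ((2 * n + 1).choose (2 * m + 1) : ℤ) * g m * h (n - m) = f n) :
    (egf (oddSpread f) : K⟦X⟧) = egf (oddSpread g) * egf (evenSpread h) := by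
  rw [egf_mul]
  congr 1
  funext k
  obtain ⟨n, rfl | rfl⟩ := k.even_or_odd'
  · rw [oddSpread_two_mul, eq_comm]
    refine sum_eq_zero fun i hi => ?_
    obtain ⟨j, rfl | rfl⟩ := i.even_or_odd'
    · simp
    · have hj : 2 * n - (2 * j + 1) = 2 * (n - j - 1) + 1 := by simp at hi; omega
      simp [hj]
  · rw [oddSpread_two_mul_add_one, show 2 * n + 1 + 1 = 2 * (n + 1) by ring, sum_range_two_mul,
      ← hfgh]
    refine sum_congr rfl fun m hm => ?_
    have hm : 2 * n + 1 - (2 * m + 1) = 2 * (n - m) := by simp at hm; omega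
    simp [hm]

section PadicIntegrality

variable (p : ℕ) [Fact p.Prime]

noncomputable def padicIntSeries : Subring ℚ_[p]⟦X⟧ := (map (PadicInt.subring p).subtype).range

variable {p}

lemma Padic.norm_natCast_eq_zpow_neg_padicValNat {n : ℕ} (hn : n ≠ 0) :
    ‖(n : ℚ_[p])‖ = (p : ℝ) ^ (-(padicValNat p n : ℤ)) := by
  rw [Padic.norm_eq_zpow_neg_valuation (by exact_mod_cast hn), Padic.valuation_natCast]

lemma egf_mem_padicIntSeries_iff {a : ℕ → ℤ} :
    egf a ∈ padicIntSeries p ↔ ∀ k, (p : ℤ) ^ padicValNat p k ! ∣ a k := by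
  simp only [padicIntSeries, mem_range_map_subtype_iff, PadicInt.mem_subring_iff, coeff_egf,
    norm_div, ← Padic.norm_int_le_pow_iff_dvd]
  refine forall_congr' fun k => ?_
  rw [div_le_one (norm_pos_iff.mpr (by exact_mod_cast k.factorial_ne_zero)),
    Padic.norm_natCast_eq_zpow_neg_padicValNat k.factorial_ne_zero]

end PadicIntegrality

lemma sum_choose_mul_mul_Pi3_eq_Pi1 {u : ℕ → ℤ} (hu0 : u 0 = 1)
    (hu : ∀ n : ℕ, 1 ≤ n →
      u n = Pi1 n - ∑ m ∈ range n, ((2 * n + 1).choose (2 * m + 1) : ℤ) * Pi3 (n - m) * u m)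
    (n : ℕ) :
    ∑ m ∈ range (n + 1), ((2 * n + 1).choose (2 * m + 1) : ℤ) * u m * Pi3 (n - m) = Pi1 n := by
  rcases n with _ | n
  · simp [hu0, Pi1, Pi3]
  · rw [sum_range_succ, hu (n + 1) n.succ_pos, Nat.sub_self, Nat.choose_self]
    simp only [mul_right_comm _ (u _)]
    simp [Pi3]

lemma dvd_sub_Pi1 {u : ℕ → ℤ}
    (hu : ∀ n : ℕ, 1 ≤ n →
      u n = Pi1 n - ∑ m ∈ range n, ((2 * n + 1).choose (2 * m + 1) : ℤ) * Pi3 (n - m) * u m)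
    {p n : ℕ} (hp : p.Prime) (hn : 1 ≤ n) (hpn : 2 * n + 1 = p) :
    (p : ℤ) ∣ u n - Pi1 n := by
  rw [hu n hn, sub_sub_cancel_left, dvd_neg, hpn]
  refine dvd_sum fun m hm => dvd_mul_of_dvd_left (dvd_mul_of_dvd_left ?_ _) _
  exact Int.natCast_dvd_natCast.mpr (hp.dvd_choose_self (by omega) (by simp at hm; omega))

lemma one_sub_mul_sq_mul_egf_evenSpread {K : Type*} [Field K] [CharZero K] {u : ℕ → ℤ}
    (hrec : ∀ n, ∑ m ∈ range (n + 1),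
      ((2 * n + 1).choose (2 * m + 1) : ℤ) * u m * Pi3 (n - m) = Pi1 n) :
    (1 - 4 * X ^ 2) * egf (evenSpread Pi3) ^ 2 * egf (evenSpread u) = (1 : K⟦X⟧) := by
  have hW := (solvesODE_egf (K := K) evenSpread_Pi3_add_two).wronskian
    (solvesODE_egf oddSpread_Pi1_add_two)
  have hW0 : constantCoeff (egf (evenSpread Pi3) : K⟦X⟧) *
      constantCoeff (d⁄dX K (egf (oddSpread Pi1))) - constantCoeff (egf (oddSpread Pi1) : K⟦X⟧) *
      constantCoeff (d⁄dX K (egf (evenSpread Pi3))) = 1 := by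
    simp [derivative_egf, evenSpread, oddSpread, Pi1, Pi3]
  have hW' : d⁄dX K (egf (oddSpread u)) = egf (evenSpread u) := by
    rw [derivative_egf]
    simp only [oddSpread_succ]
  rw [hW0, map_one, egf_oddSpread_eq_mul hrec, Derivation.leibniz, hW', smul_eq_mul,
    smul_eq_mul] at hW
  linear_combination hW

lemma pow_padicValNat_factorial_dvd {u : ℕ → ℤ}
    (hrec : ∀ n, ∑ m ∈ range (n + 1),
      ((2 * n + 1).choose (2 * m + 1) : ℤ) * u m * Pi3 (n - m) = Pi1 n)
    {p : ℕ} [Fact p.Prime] (hp4 : p % 4 = 1) (n : ℕ) :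
    (p : ℤ) ^ padicValNat p (2 * n)! ∣ u n := by
  have hF : egf (evenSpread Pi3) ∈ padicIntSeries p := egf_mem_padicIntSeries_iff.mpr fun k => by
    obtain ⟨m, rfl | rfl⟩ := k.even_or_odd'
    · simpa using pow_padicValNat_factorial_dvd_Pi3 hp4 m
    · simp
  have hX : (X : ℚ_[p]⟦X⟧) ∈ padicIntSeries p := ⟨X, map_X _⟩
  have hA : (1 - 4 * X ^ 2) * egf (evenSpread Pi3) ^ 2 ∈ padicIntSeries p :=
    mul_mem (sub_mem (one_mem _) (mul_mem (ofNat_mem _ 4) (pow_mem hX 2))) (pow_mem hF 2)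
  have hA0 : constantCoeff ((1 - 4 * X ^ 2) * egf (evenSpread Pi3) ^ 2 : ℚ_[p]⟦X⟧) = 1 := by
    simp [evenSpread, Pi3]
  have hU := mem_range_map_subtype_of_mul_eq_one hA hA0 (one_sub_mul_sq_mul_egf_evenSpread hrec)
  simpa using egf_mem_padicIntSeries_iff.mp hU (2 * n)

theorem romik_u_mod_p_pow_one_mod_four
    (p : ℕ) (hp : p.Prime) (hp1 : p % 4 = 1)
    (u : ℕ → ℤ)
    (hu0 : u 0 = 1)
    (hu : ∀ n : ℕ, 1 ≤ n →
      u n = Pi1 n - ∑ m ∈ Finset.range n,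
        ((2 * n + 1).choose (2 * m + 1) : ℤ) * Pi3 (n - m) * u m) :
    (∀ e : ℕ, 1 ≤ e → ∀ n : ℕ, (e * p + 1) / 2 ≤ n → (p : ℤ) ^ e ∣ u n) ∧
    ¬ (p : ℤ) ∣ u ((p - 1) / 2) ∧
    ∃ x : ℤ, (p : ℤ) ∣ u ((p - 1) / 2) - x ^ 2 := by
  have : Fact p.Prime := ⟨hp⟩
  have hp5 : 5 ≤ p := by have := hp.two_le; omega
  have hPi1 : (p : ℤ) ∣ u ((p - 1) / 2) - Pi1 ((p - 1) / 2) :=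
    dvd_sub_Pi1 hu hp (by omega) (by omega)
  refine ⟨fun e _ n hn => ?_, fun h => ?_, ⟨_, Pi1_eq_sq _ ▸ hPi1⟩⟩
  · exact (pow_dvd_pow _ (le_padicValNat_factorial (n := 2 * n) (by omega))).trans
      (pow_padicValNat_factorial_dvd (sum_choose_mul_mul_Pi3_eq_Pi1 hu0 hu) hp1 n)
  · exact not_dvd_Pi1 (n := (p - 1) / 2) hp hp1 (by omega) (by simpa using dvd_sub h hPi1)
end

section
/- Let p be an odd prime number and let e ≥ 2 be an integer. Then p^e divides v(n) for all integers n ≥ ⌈(e−1)p²/2⌉. -/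
/-!
Let `w(x) = digitWeight p x` be `⌊x / p²⌋ + 1` for `x ≥ p²`, and for `x = q p + r < p²`
(base-`p` digits) let `w(x) = 1` if `r < q` and `w(x) = 0` otherwise. Then `p ^ w(2n) ∣ v(n)`
for `n ≥ 1`, by strong induction: as `p` is odd it suffices that `p ^ w(2n)` divides every term
on the right of the recurrence. Every `p` consecutive factors `4j - 3` of `Π₃(n)` contain a
multiple of `p`, so `p ^ (2⌊n/p⌋) ∣ Π₃(n)`, and `w(2n) ≤ 2⌊n/p⌋`. By Kummer's theorem
`C(a + b, a)` is divisible by `p` to the number of carries in positions 1 and 2 when adding `a`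
and `b` in base `p`, and that number is at least `w(a + b) - w(a) - w(b)`. Finally `w(2n) ≥ e`
once `2n ≥ (e - 1)p²`.
-/

open Finset

theorem Nat.Prime.pow_card_carries_dvd_choose_add {p : ℕ} (hp : p.Prime) (a b : ℕ)
    (s : Finset ℕ) (hs : 0 ∉ s) :
    p ^ #{i ∈ s | p ^ i ≤ a % p ^ i + b % p ^ i} ∣ (a + b).choose a := by
  rw [add_comm, pow_dvd_iff_le_emultiplicity, hp.emultiplicity_choose' (Nat.lt_succ_self _)]
  refine Nat.cast_le.mpr (card_le_card fun i hi => ?_)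
  obtain ⟨his, hcarry⟩ := mem_filter.mp hi
  have hi0 : i ≠ 0 := fun h => hs (h ▸ his)
  have hle : p ^ i ≤ b + a := by
    have := Nat.mod_le a (p ^ i); have := Nat.mod_le b (p ^ i); omega
  exact mem_filter.mpr
    ⟨mem_Ico.mpr ⟨by omega, Nat.lt_succ_of_le (Nat.le_log_of_pow_le hp.one_lt hle)⟩, hcarry⟩

theorem Nat.Prime.pow_carries_dvd_choose_add {p : ℕ} (hp : p.Prime) (a b : ℕ) :
    p ^ ((if p ≤ a % p + b % p then 1 else 0) + if p ^ 2 ≤ a % p ^ 2 + b % p ^ 2 then 1 else 0)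
      ∣ (a + b).choose a := by
  convert hp.pow_card_carries_dvd_choose_add a b {1, 2} (by simp) using 2
  simp only [filter_insert, filter_singleton, pow_one]
  split_ifs <;> simp

lemma mod_lt_div_or_mod_lt_div_of_sq_le_add {p a b : ℕ} (hcarry : a % p + b % p < p)
    (h : p ^ 2 ≤ a + b) : a % p < a / p ∨ b % p < b / p := by
  by_contra! hab
  have := Nat.div_add_mod a p
  have := Nat.div_add_mod b p
  nlinarith

def digitWeight (p x : ℕ) : ℕ :=
  if p ^ 2 ≤ x then x / p ^ 2 + 1 else if x % p < x / p then 1 else 0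

theorem pow_digitWeight_add_dvd {p : ℕ} (hp : p.Prime) (a b : ℕ) :
    p ^ digitWeight p (a + b) ∣ (a + b).choose a * p ^ digitWeight p a * p ^ digitWeight p b := by
  have hC := hp.pow_carries_dvd_choose_add a b
  set c := (if p ≤ a % p + b % p then 1 else 0) + if p ^ 2 ≤ a % p ^ 2 + b % p ^ 2 then 1 else 0
    with hc
  suffices digitWeight p (a + b) ≤ c + digitWeight p a + digitWeight p b from
    (pow_dvd_pow p this).trans (by rw [pow_add, pow_add]; gcongr)
  have hdiv := Nat.add_div (a := a) (b := b) hp.pos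
  have hmod := Nat.add_mod_of_add_mod_lt (a := a) (b := b) (c := p)
  have hdiv2 := Nat.add_div (a := a) (b := b) (pow_pos hp.pos 2)
  have hsmall (x : ℕ) : x < p ^ 2 ↔ x / p ^ 2 = 0 :=
    (Nat.div_eq_zero_iff_lt (pow_pos hp.pos 2)).symm
  have hdigits := mod_lt_div_or_mod_lt_div_of_sq_le_add (p := p) (a := a) (b := b)
  have := hsmall a; have := hsmall b; have := hsmall (a + b)
  have := Nat.mod_lt a hp.pos; have := Nat.mod_lt b hp.pos
  -- `hdiv`, `hmod`, `hdiv2` give the digits of `a + b` from those of `a`, `b` and the carries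
  -- counted by `c`; only the case `a, b < p² ≤ a + b` without a first carry needs `hdigits`
  simp only [digitWeight, hc]
  split_ifs at * <;> omega

lemma Pi3_add (m k : ℕ) :
    Pi3 (m + k) = Pi3 m * ∏ j ∈ Ioc m (m + k), (4 * (j : ℤ) - 3) ^ 2 := by
  have hIcc (n : ℕ) : Icc 1 n = Ioc 0 n := Icc_add_one_left_eq_Ioc 0 n
  simp only [Pi3, hIcc]
  exact (prod_Ioc_consecutive _ (Nat.zero_le m) (Nat.le_add_right m k)).symm

lemma Pi3_dvd_Pi3 {m n : ℕ} (h : m ≤ n) : Pi3 m ∣ Pi3 n :=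
  prod_dvd_prod_of_subset _ _ _ (Icc_subset_Icc_right h)

lemma ZMod.exists_mem_Ioc_natCast_eq {p : ℕ} [NeZero p] (m : ℕ) (x : ZMod p) :
    ∃ j ∈ Ioc m (m + p), (j : ZMod p) = x := by
  have := ZMod.val_lt (x - ((m + 1 : ℕ) : ZMod p))
  exact ⟨m + 1 + (x - ((m + 1 : ℕ) : ZMod p)).val, mem_Ioc.mpr ⟨by omega, by omega⟩, by simp⟩

lemma sq_dvd_prod_Ioc {p : ℕ} (hp : p.Prime) (hodd : p ≠ 2) (m : ℕ) :
    (p : ℤ) ^ 2 ∣ ∏ j ∈ Ioc m (m + p), (4 * (j : ℤ) - 3) ^ 2 := by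
  have := Fact.mk hp
  have h4 : (4 : ZMod p) ≠ 0 := by
    intro h
    have : p ∣ 2 ^ 2 := (ZMod.natCast_eq_zero_iff _ _).mp (by exact_mod_cast h)
    exact hodd ((Nat.prime_dvd_prime_iff_eq hp Nat.prime_two).mp (hp.dvd_of_dvd_pow this))
  obtain ⟨j, hj, hjx⟩ := ZMod.exists_mem_Ioc_natCast_eq m (3 * 4⁻¹ : ZMod p)
  have hroot : (p : ℤ) ∣ 4 * j - 3 := by
    rw [← ZMod.intCast_zmod_eq_zero_iff_dvd]
    push_cast
    rw [hjx, mul_left_comm, mul_inv_cancel₀ h4, mul_one, sub_self]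
  exact (pow_dvd_pow_of_dvd hroot 2).trans (dvd_prod_of_mem _ hj)

lemma pow_dvd_Pi3_s6 {p : ℕ} (hp : p.Prime) (hodd : p ≠ 2) (n : ℕ) :
    (p : ℤ) ^ (2 * (n / p)) ∣ Pi3 n := by
  suffices ∀ k, (p : ℤ) ^ (2 * k) ∣ Pi3 (p * k) from
    (this (n / p)).trans (Pi3_dvd_Pi3 (Nat.mul_div_le n p))
  intro k
  induction k with
  | zero => simp
  | succ k ih =>
    rw [mul_add_one p k, Pi3_add, mul_add_one 2 k, pow_add]
    exact mul_dvd_mul ih (sq_dvd_prod_Ioc hp hodd _)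

lemma digitWeight_two_mul_le {p : ℕ} (hp : p.Prime) (hodd : p ≠ 2) (n : ℕ) :
    digitWeight p (2 * n) ≤ 2 * (n / p) := by
  have hp3 : 3 ≤ p := by have := hp.two_le; omega
  have hhalf : 2 * n / p ≤ 2 * (n / p) + 1 := by
    rw [two_mul, two_mul, Nat.add_div hp.pos]; split_ifs <;> omega
  unfold digitWeight
  split_ifs with hbig hsmall
  · have hsq : 2 * n / p ^ 2 ≤ 2 * n / p / 3 := by
      rw [sq, ← Nat.div_div_eq_div_mul]; exact Nat.div_le_div_left hp3 (by norm_num)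
    have : p ≤ 2 * n / p := (Nat.le_div_iff_mul_le hp.pos).mpr (by rwa [← sq])
    omega
  · -- the two base-`p` digits of `2 * n` are `1, 0` only if `2 * n = p`, which is odd
    have hq : 2 * n / p ≠ 1 := by
      intro hq
      have := Nat.div_add_mod (2 * n) p
      rw [hq] at this
      exact hodd ((hp.even_iff).mp ⟨n, by omega⟩)
    omega
  · omega

theorem dvd_of_recurrence (v : ℕ → ℤ)
    (hv : ∀ n : ℕ, 1 ≤ n →
      2 * v n = 2 ^ n * Pi3 n - ∑ m ∈ Finset.Ico 1 n,
        ((2 * n).choose (2 * m) : ℤ) * v m * v (n - m))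
    (d : ℕ → ℤ) (hd : ∀ n, IsCoprime (d n) 2) (hPi3 : ∀ n, d n ∣ Pi3 n)
    (hchoose : ∀ n m, m < n → d n ∣ ((2 * n).choose (2 * m) : ℤ) * d m * d (n - m))
    {n : ℕ} (hn : 1 ≤ n) : d n ∣ v n := by
  induction n using Nat.strong_induction_on with
  | _ n ih =>
  refine (hd n).dvd_of_dvd_mul_left ?_
  rw [hv n hn]
  refine dvd_sub ((hPi3 n).mul_left _) (dvd_sum fun m hm => ?_)
  obtain ⟨hm1, hmn⟩ := mem_Ico.mp hm
  exact (hchoose n m hmn).trans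
    (mul_dvd_mul (mul_dvd_mul_left _ (ih m hmn hm1)) (ih (n - m) (by omega) (by omega)))

theorem romik_v_vanishes_mod_p_pow_general
    (p : ℕ) (hp : p.Prime) (hodd : p ≠ 2) (e : ℕ) (he : 2 ≤ e)
    (v : ℕ → ℤ)
    (hv : ∀ n : ℕ, 1 ≤ n →
      2 * v n = 2 ^ n * Pi3 n - ∑ m ∈ Finset.Ico 1 n,
        ((2 * n).choose (2 * m) : ℤ) * v m * v (n - m)) :
    ∀ n : ℕ, ((e - 1) * p ^ 2 + 1) / 2 ≤ n → (p : ℤ) ^ e ∣ v n := by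
  intro n hn
  have hp2 : 0 < p ^ 2 := pow_pos hp.pos 2
  have hbig : (e - 1) * p ^ 2 ≤ 2 * n := by omega
  have hsq : p ^ 2 ≤ 2 * n := (Nat.le_mul_of_pos_left _ (by omega)).trans hbig
  have hweight : e ≤ digitWeight p (2 * n) := by
    have := (Nat.le_div_iff_mul_le hp2).mpr hbig
    rw [digitWeight, if_pos hsq]
    omega
  refine (pow_dvd_pow _ hweight).trans
    (dvd_of_recurrence v hv (fun k => (p : ℤ) ^ digitWeight p (2 * k)) (fun _ => ?_) (fun k => ?_)
      (fun k m hmk => ?_) (by omega))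
  · exact (Nat.isCoprime_iff_coprime.mpr ((Nat.coprime_primes hp Nat.prime_two).mpr hodd)).pow_left
  · exact (pow_dvd_pow _ (digitWeight_two_mul_le hp hodd k)).trans (pow_dvd_Pi3_s6 hp hodd k)
  · have := pow_digitWeight_add_dvd hp (2 * m) (2 * (k - m))
    rw [← mul_add, Nat.add_sub_cancel' hmk.le] at this
    exact_mod_cast this

theorem romik_v_vanishes_mod_p_pow
    (p : ℕ) (hp : p.Prime) (hodd : p ≠ 2) (e : ℕ) (he : 2 ≤ e)
    (v : ℕ → ℤ)
    (hv0 : v 0 = 1)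
    (hv : ∀ n : ℕ, 1 ≤ n →
      2 * v n = 2 ^ n * Pi3 n - ∑ m ∈ Finset.Ico 1 n,
        ((2 * n).choose (2 * m) : ℤ) * v m * v (n - m)) :
    ∀ n : ℕ, ((e - 1) * p ^ 2 + 1) / 2 ≤ n → (p : ℤ) ^ e ∣ v n :=
  romik_v_vanishes_mod_p_pow_general p hp hodd e he v hv
end

section
/- Let p be a prime number with p ≡ 1 (mod 4) and let e be a positive integer. Then p^e divides v(n) for all integers n ≥ ⌈ep/2⌉. -/
open Finset

namespace Nat

theorem Prime.dvd_choose_add_of_le_mod_add_mod {p a b : ℕ} (hp : p.Prime)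
    (h : p ≤ a % p + b % p) : p ∣ (a + b).choose a := by
  have : Fact p.Prime := ⟨hp⟩
  have hcarry : (a + b) % p < a % p := by
    have ha := Nat.mod_lt a hp.pos
    have hb := Nat.mod_lt b hp.pos
    have hsum : (a + b) % p = a % p + b % p - p := by
      rw [Nat.add_mod, Nat.mod_eq_sub_mod h, Nat.mod_eq_of_lt (a := a % p + b % p - p) (by omega)]
    omega
  have hlucas := Choose.choose_modEq_choose_mod_mul_choose_div_nat (n := a + b) (k := a) (p := p)
  rw [Nat.choose_eq_zero_of_lt hcarry, zero_mul] at hlucas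
  exact Nat.modEq_zero_iff_dvd.mp hlucas

theorem Prime.pow_add_div_dvd_choose_mul {p : ℕ} (hp : p.Prime) (a b : ℕ) :
    p ^ ((a + b) / p) ∣ (a + b).choose a * p ^ (a / p) * p ^ (b / p) := by
  rw [Nat.add_div hp.pos]
  split_ifs with hc
  · obtain ⟨c, hchoose⟩ := hp.dvd_choose_add_of_le_mod_add_mod hc
    exact ⟨c, by rw [hchoose]; ring⟩
  · rw [add_zero, pow_add, mul_assoc]
    exact dvd_mul_left _ _

end Nat

/-- `(n + p - j₀) / p` counts the `j₀ + i * p ≤ n` with `i : ℕ`. -/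
theorem pow_div_dvd_prod_Icc {M : Type*} [CommMonoid M] {p j₀ : ℕ} (hj₀ : 1 ≤ j₀) {a : M}
    {f : ℕ → M} (hf : ∀ j, j ≡ j₀ [MOD p] → a ∣ f j) (n : ℕ) :
    a ^ ((n + p - j₀) / p) ∣ ∏ j ∈ Icc 1 n, f j := by
  induction n with
  | zero =>
    rw [Nat.div_eq_zero_iff.mpr (by omega), pow_zero]
    exact one_dvd _
  | succ n ih =>
    rw [prod_Icc_succ_top (by omega)]
    rcases lt_or_ge (n + p) j₀ with hsmall | hlarge
    · rw [show n + 1 + p - j₀ = 0 by omega, Nat.zero_div, pow_zero]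
      exact one_dvd _
    · have hshift : n + 1 + p - j₀ = n + p - j₀ + 1 := by omega
      rw [hshift, Nat.succ_div]
      split_ifs with hdvd
      · have hmod : j₀ ≡ n + 1 + p [MOD p] :=
          (Nat.modEq_iff_dvd' (by omega)).mpr (hshift ▸ hdvd)
        rw [pow_succ]
        exact mul_dvd_mul ih (hf _ ((Nat.add_modEq_left_iff.mpr dvd_rfl).symm.trans hmod.symm))
      · rw [add_zero]
        exact ih.mul_right _

theorem pow_two_mul_div_dvd_Pi3 {p : ℕ} (hp1 : p % 4 = 1) (n : ℕ) :
    (p : ℤ) ^ (2 * n / p) ∣ Pi3 n := by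
  set j₀ := (p + 3) / 4
  have hroot : ∀ j, j ≡ j₀ [MOD p] → (p : ℤ) ^ 2 ∣ (4 * (j : ℤ) - 3) ^ 2 := by
    intro j hj
    obtain ⟨c, hc⟩ := (Int.natCast_modEq_iff.mpr hj).dvd
    have h4 : 4 * (j₀ : ℤ) = p + 3 := by omega
    exact pow_dvd_pow_of_dvd ⟨1 - 4 * c, by linear_combination h4 - 4 * hc⟩ 2
  have hcount : 2 * n / p ≤ 2 * ((n + p - j₀) / p) := by
    have hp0 : 0 < p := by omega
    refine Nat.le_of_lt_succ ((Nat.div_lt_iff_lt_mul hp0).mpr ?_)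
    have := Nat.lt_div_mul_add (a := n + p - j₀) hp0
    rw [Nat.succ_eq_add_one, add_mul, mul_assoc]
    generalize (n + p - j₀) / p * p = X at this ⊢
    omega
  rw [Pi3]
  exact (pow_dvd_pow _ hcount).trans
    (pow_mul (p : ℤ) 2 _ ▸ pow_div_dvd_prod_Icc (by omega) hroot n)

theorem pow_two_mul_div_dvd_of_two_mul_eq_sub_sum {p : ℕ} (hp : p.Prime) (hodd : Odd p)
    (F v : ℕ → ℤ) (hF : ∀ n, (p : ℤ) ^ (2 * n / p) ∣ F n)
    (hv : ∀ n, 1 ≤ n →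
      2 * v n = F n - ∑ m ∈ Ico 1 n, ((2 * n).choose (2 * m) : ℤ) * v m * v (n - m))
    (n : ℕ) : (p : ℤ) ^ (2 * n / p) ∣ v n := by
  induction n using Nat.strong_induction_on with
  | _ n ih =>
  rcases Nat.eq_zero_or_pos n with rfl | hn
  · simp
  have hterm : ∀ m ∈ Ico 1 n,
      (p : ℤ) ^ (2 * n / p) ∣ ((2 * n).choose (2 * m) : ℤ) * v m * v (n - m) := by
    intro m hm
    obtain ⟨hm1, hmn⟩ := mem_Ico.mp hm
    have hchoose :=
      Int.natCast_dvd_natCast.mpr (hp.pow_add_div_dvd_choose_mul (2 * m) (2 * (n - m)))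
    rw [show 2 * m + 2 * (n - m) = 2 * n by omega] at hchoose
    push_cast at hchoose
    exact hchoose.trans (mul_dvd_mul (mul_dvd_mul_left _ (ih m hmn)) (ih (n - m) (by omega)))
  have hcop : IsCoprime ((p : ℤ) ^ (2 * n / p)) 2 :=
    (Nat.coprime_two_right.mpr hodd).isCoprime.pow_left
  refine hcop.dvd_of_dvd_mul_left ?_
  rw [hv n hn]
  exact dvd_sub (hF n) (dvd_sum hterm)

theorem romik_v_vanishes_mod_p_pow_one_mod_four_general
    (p : ℕ) (hp : p.Prime) (hp1 : p % 4 = 1) (e : ℕ)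
    (v : ℕ → ℤ)
    (hv : ∀ n : ℕ, 1 ≤ n →
      2 * v n = 2 ^ n * Pi3 n - ∑ m ∈ Finset.Ico 1 n,
        ((2 * n).choose (2 * m) : ℤ) * v m * v (n - m)) :
    ∀ n : ℕ, (e * p + 1) / 2 ≤ n → (p : ℤ) ^ e ∣ v n := by
  intro n hn
  have hodd : Odd p := Nat.odd_iff.mpr (by omega)
  have hforcing (k : ℕ) : (p : ℤ) ^ (2 * k / p) ∣ 2 ^ k * Pi3 k :=
    (pow_two_mul_div_dvd_Pi3 hp1 k).mul_left _
  have he : e ≤ 2 * n / p := (Nat.le_div_iff_mul_le hp.pos).mpr (by omega)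
  exact (pow_dvd_pow _ he).trans
    (pow_two_mul_div_dvd_of_two_mul_eq_sub_sum hp hodd _ v hforcing hv n)

theorem romik_v_vanishes_mod_p_pow_one_mod_four
    (p : ℕ) (hp : p.Prime) (hp1 : p % 4 = 1) (e : ℕ) (he : 1 ≤ e)
    (v : ℕ → ℤ)
    (hv0 : v 0 = 1)
    (hv : ∀ n : ℕ, 1 ≤ n →
      2 * v n = 2 ^ n * Pi3 n - ∑ m ∈ Finset.Ico 1 n,
        ((2 * n).choose (2 * m) : ℤ) * v m * v (n - m)) :
    ∀ n : ℕ, (e * p + 1) / 2 ≤ n → (p : ℤ) ^ e ∣ v n :=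
  romik_v_vanishes_mod_p_pow_one_mod_four_general p hp hp1 e v hv
end

section
/- Let p be an odd prime number. Then: (1) p divides u(ap+b) for all integers a, b with 1 ≤ a ≤ (p−1)/2 and 0 ≤ b ≤ a−1; (2) p divides u(ap + (p−1)/2 + b) for all integers a, b with 1 ≤ a ≤ (p−1)/2 and 0 ≤ b ≤ a; (3) if moreover p ≡ 3 (mod 4), then p divides u((p−1)/2). -/
lemma dvd_Pi1 {d : ℤ} {j N : ℕ} (hj : 1 ≤ j) (hjN : j ≤ N) (h : d ∣ 4 * (j : ℤ) - 1) :
    d ∣ Pi1 N :=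
  (dvd_pow h two_ne_zero).trans (Finset.dvd_prod_of_mem _ (Finset.mem_Icc.2 ⟨hj, hjN⟩))

lemma dvd_Pi3 {d : ℤ} {j N : ℕ} (hj : 1 ≤ j) (hjN : j ≤ N) (h : d ∣ 4 * (j : ℤ) - 3) :
    d ∣ Pi3 N :=
  (dvd_pow h two_ne_zero).trans (Finset.dvd_prod_of_mem _ (Finset.mem_Icc.2 ⟨hj, hjN⟩))

lemma dvd_Pi1_of_mod_four_eq_three {p N : ℕ} (hp : p % 4 = 3) (hN : (p + 1) / 4 ≤ N) :
    (p : ℤ) ∣ Pi1 N :=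
  dvd_Pi1 (j := (p + 1) / 4) (by omega) hN ⟨1, by omega⟩

lemma dvd_Pi1_of_le {p N : ℕ} (hp : p % 2 = 1) (hN : p ≤ N) : (p : ℤ) ∣ Pi1 N := by
  rcases (by omega : p % 4 = 1 ∨ p % 4 = 3) with h | h
  · exact dvd_Pi1 (j := (3 * p + 1) / 4) (by omega) (by omega) ⟨3, by omega⟩
  · exact dvd_Pi1_of_mod_four_eq_three h (by omega)

lemma dvd_Pi3_of_mod_four_eq_one {p N : ℕ} (hp : p % 4 = 1) (hN : (p + 3) / 4 ≤ N) :
    (p : ℤ) ∣ Pi3 N :=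
  dvd_Pi3 (j := (p + 3) / 4) (by omega) hN ⟨1, by omega⟩

lemma dvd_Pi3_of_le {p N : ℕ} (hp : p % 2 = 1) (hN : p ≤ N) : (p : ℤ) ∣ Pi3 N := by
  rcases (by omega : p % 4 = 1 ∨ p % 4 = 3) with h | h
  · exact dvd_Pi3_of_mod_four_eq_one h (by omega)
  · exact dvd_Pi3 (j := (3 * p + 3) / 4) (by omega) (by omega) ⟨3, by omega⟩

lemma Nat.Prime.dvd_choose_of_mod_lt_mod {p n k : ℕ} (hp : p.Prime) (h : n % p < k % p) :
    p ∣ n.choose k := by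
  have : Fact p.Prime := ⟨hp⟩
  refine Nat.modEq_zero_iff_dvd.1 (Choose.choose_modEq_choose_mod_mul_choose_div_nat.trans ?_)
  rw [Nat.choose_eq_zero_of_lt h, zero_mul]

/-- The three families of the theorem are `(D, r) = (2a, 2b + 1)`, `(2a + 1, 2b)` and `(1, 0)`. -/
def Admissible (p n : ℕ) : Prop :=
  ∃ D r, 2 * n + 1 = D * p + r ∧ r < D ∧ D ≤ p ∧ (D = 1 → p % 4 = 3)

namespace Admissible

variable {p n : ℕ}

lemma dvd_Pi1 (hp : p % 2 = 1) (hn : Admissible p n) : (p : ℤ) ∣ Pi1 n := by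
  obtain ⟨D, r, hN, hrD, -, hD1⟩ := hn
  rcases (by omega : D = 1 ∨ 2 ≤ D) with rfl | hD
  · exact dvd_Pi1_of_mod_four_eq_three (hD1 rfl) (by omega)
  · have : 2 * p ≤ D * p := Nat.mul_le_mul_right p hD
    exact dvd_Pi1_of_le hp (by omega)

lemma dvd_choose_or_dvd_Pi3_or_admissible {m : ℕ} (hp : p.Prime) (hp2 : p ≠ 2)
    (hn : Admissible p n) (hmn : m < n) :
    p ∣ (2 * n + 1).choose (2 * m + 1) ∨ (p : ℤ) ∣ Pi3 (n - m) ∨ Admissible p m := by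
  obtain ⟨D, r, hN, hrD, hDp, hD1⟩ := hn
  have hodd : p % 2 = 1 := hp.eq_two_or_odd.resolve_left hp2
  have hp0 : 0 < p := hp.pos
  have digits {k C s : ℕ} (hk : k = C * p + s) (hs : s < p) : k / p = C ∧ k % p = s :=
    (Nat.div_mod_unique hp0).2 ⟨by rw [hk]; ring, hs⟩
  obtain ⟨C, s, hM, hs⟩ : ∃ C s, 2 * m + 1 = C * p + s ∧ s < p :=
    ⟨_, _, (Nat.div_add_mod' _ p).symm, Nat.mod_lt _ hp0⟩
  have hCD : C ≤ D := by
    rw [← (digits hM hs).1, ← (digits hN (by omega)).1]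
    exact Nat.div_le_div_right (by omega)
  by_cases hrs : r < s
  · exact Or.inl (hp.dvd_choose_of_mod_lt_mod (by rwa [(digits hN (by omega)).2, (digits hM hs).2]))
  rcases (by omega : C = D ∨ C + 1 = D ∨ C + 2 ≤ D) with hC | hC | hC
  · exact Or.inr (Or.inr ⟨C, s, hM, by omega, by omega, fun hC1 => hD1 (by omega)⟩)
  · -- `2n + 1` and `2m + 1` are odd, so `r - s = (2n + 1 - (2m + 1)) - p` is odd.
    have hsr : s < r := by
      have : D * p = C * p + p := by rw [← hC]; ring
      omega
    by_cases hC2 : 2 ≤ C ∨ p % 4 = 3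
    · exact Or.inr (Or.inr ⟨C, s, hM, by omega, by omega, by omega⟩)
    · have hC1 : C = 1 := by omega
      subst hC
      exact Or.inr (Or.inl (dvd_Pi3_of_mod_four_eq_one (by omega) (by rw [hC1] at hN hM; omega)))
  · have : C * p + 2 * p ≤ D * p := by nlinarith
    exact Or.inr (Or.inl (dvd_Pi3_of_le hodd (by omega)))

lemma dvd_of_recursion (hp : p.Prime) (hp2 : p ≠ 2) {u : ℕ → ℤ}
    (hu : ∀ n : ℕ, 1 ≤ n →
      u n = Pi1 n - ∑ m ∈ Finset.range n,
        ((2 * n + 1).choose (2 * m + 1) : ℤ) * Pi3 (n - m) * u m)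
    (hn : Admissible p n) : (p : ℤ) ∣ u n := by
  induction n using Nat.strong_induction_on with
  | _ n ih =>
  have hodd : p % 2 = 1 := hp.eq_two_or_odd.resolve_left hp2
  have hn1 : 1 ≤ n := by
    obtain ⟨D, r, hN, hrD, -, -⟩ := hn
    have : p ≤ D * p := Nat.le_mul_of_pos_left p (by omega)
    have := hp.two_le
    omega
  rw [hu n hn1]
  refine dvd_sub (hn.dvd_Pi1 hodd) (Finset.dvd_sum fun m hm => ?_)
  have hmn := Finset.mem_range.1 hm
  rcases hn.dvd_choose_or_dvd_Pi3_or_admissible hp hp2 hmn with h | h | h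
  · exact ((Int.natCast_dvd_natCast.2 h).mul_right _).mul_right _
  · exact (h.mul_left _).mul_right _
  · exact (ih m hmn h).mul_left _

end Admissible

theorem romik_u_small_divisibility_general
    (p : ℕ) (hp : p.Prime) (hodd : p ≠ 2)
    (u : ℕ → ℤ)
    (hu : ∀ n : ℕ, 1 ≤ n →
      u n = Pi1 n - ∑ m ∈ Finset.range n,
        ((2 * n + 1).choose (2 * m + 1) : ℤ) * Pi3 (n - m) * u m) :
    (∀ a b : ℕ, 1 ≤ a → a ≤ (p - 1) / 2 → b ≤ a - 1 →
      (p : ℤ) ∣ u (a * p + b)) ∧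
    (∀ a b : ℕ, 1 ≤ a → a ≤ (p - 1) / 2 → b ≤ a →
      (p : ℤ) ∣ u (a * p + (p - 1) / 2 + b)) ∧
    (p % 4 = 3 → (p : ℤ) ∣ u ((p - 1) / 2)) := by
  have key := fun n => Admissible.dvd_of_recursion (n := n) hp hodd hu
  obtain ⟨q, rfl⟩ : ∃ q, p = 2 * q + 1 := hp.eq_two_or_odd'.resolve_left hodd
  have hq : (2 * q + 1 - 1) / 2 = q := by omega
  simp only [hq]
  refine ⟨fun a b ha haq hb => key _ ⟨2 * a, 2 * b + 1, by ring, by omega, by omega, by omega⟩,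
    fun a b ha haq hb => key _ ⟨2 * a + 1, 2 * b, by ring, by omega, by omega, by omega⟩,
    fun h => key _ ⟨1, 0, by ring, by omega, by omega, fun _ => h⟩⟩

theorem romik_u_small_divisibility
    (p : ℕ) (hp : p.Prime) (hodd : p ≠ 2)
    (u : ℕ → ℤ)
    (hu0 : u 0 = 1)
    (hu : ∀ n : ℕ, 1 ≤ n →
      u n = Pi1 n - ∑ m ∈ Finset.range n,
        ((2 * n + 1).choose (2 * m + 1) : ℤ) * Pi3 (n - m) * u m) :
    (∀ a b : ℕ, 1 ≤ a → a ≤ (p - 1) / 2 → b ≤ a - 1 →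
      (p : ℤ) ∣ u (a * p + b)) ∧
    (∀ a b : ℕ, 1 ≤ a → a ≤ (p - 1) / 2 → b ≤ a →
      (p : ℤ) ∣ u (a * p + (p - 1) / 2 + b)) ∧
    (p % 4 = 3 → (p : ℤ) ∣ u ((p - 1) / 2)) :=
  romik_u_small_divisibility_general p hp hodd u hu
end

section
/- Let p be an odd prime number. Then: (1) p divides v(ap+b) for all integers a, b with 1 ≤ a ≤ (p−1)/2 and 0 ≤ b ≤ a−1; (2) p divides v(ap + (p+1)/2 + b) for all integers a, b with 1 ≤ a ≤ (p−1)/2 and 0 ≤ b ≤ a−1. -/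
theorem Nat.Prime.dvd_choose_of_mod_lt_or_div_lt {p N M : ℕ} (hp : p.Prime)
    (h : N % p < M % p ∨ N / p < M / p) : p ∣ N.choose M := by
  have := Fact.mk hp
  refine Nat.modEq_zero_iff_dvd.mp (Choose.choose_modEq_choose_mod_mul_choose_div_nat.trans ?_)
  rcases h with h | h <;> simp [Nat.choose_eq_zero_of_lt h, Nat.ModEq]

def LowDigitLt (p N : ℕ) : Prop := N % p < N / p

namespace LowDigitLt

variable {p N : ℕ}

theorem of_eq {A B : ℕ} (h : N = A * p + B) (hB : B < p) (hBA : B < A) :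
    LowDigitLt p N := by
  obtain ⟨hdiv, hmod⟩ :=
    (Nat.div_mod_unique (a := N) (d := A) (by omega)).mpr ⟨by rw [h]; ring, hB⟩
  rwa [LowDigitLt, hdiv, hmod]

theorem dvd_choose_or (hp : p.Prime) (hN : LowDigitLt p N) (M : ℕ) :
    p ∣ N.choose M ∨ LowDigitLt p M ∨ LowDigitLt p (N - M) := by
  by_cases hlt : N % p < M % p ∨ N / p < M / p
  · exact .inl (hp.dvd_choose_of_mod_lt_or_div_lt hlt)
  push Not at hlt
  by_cases hM : M % p < M / p
  · exact .inr (.inl hM)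
  refine .inr (.inr (of_eq (A := N / p - M / p) (B := N % p - M % p) ?_ ?_ ?_))
  · have hN_eq := Nat.div_add_mod' N p
    have hM_eq := Nat.div_add_mod' M p
    have := Nat.mul_le_mul_right p hlt.2
    rw [Nat.sub_mul]
    omega
  · have := Nat.mod_lt N hp.pos
    omega
  · unfold LowDigitLt at hN
    omega

theorem le_of_two_mul {n : ℕ} (hodd : Odd p) (h : LowDigitLt p (2 * n)) : p ≤ n := by
  unfold LowDigitLt at h
  have hdiv := Nat.div_add_mod' (2 * n) p
  obtain ⟨r, hr⟩ := hodd
  have hq : 2 ≤ 2 * n / p := by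
    by_contra hq
    have h1 : 2 * n / p = 1 := by omega
    rw [h1] at hdiv h
    omega
  have := Nat.mul_le_mul_right p hq
  omega

end LowDigitLt

theorem dvd_of_lowDigitLt {p : ℕ} (hp : p.Prime) (hodd : Odd p) {c v : ℕ → ℤ}
    (hc : ∀ n, p ≤ n → (p : ℤ) ∣ c n)
    (hv : ∀ n, 1 ≤ n → 2 * v n = c n - ∑ m ∈ Finset.Ico 1 n,
      ((2 * n).choose (2 * m) : ℤ) * v m * v (n - m))
    (n : ℕ) (hn : LowDigitLt p (2 * n)) : (p : ℤ) ∣ v n := by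
  induction n using Nat.strong_induction_on with
  | _ n ih =>
  have hpn : p ≤ n := hn.le_of_two_mul hodd
  have hsum : (p : ℤ) ∣
      ∑ m ∈ Finset.Ico 1 n, ((2 * n).choose (2 * m) : ℤ) * v m * v (n - m) := by
    refine Finset.dvd_sum fun m hm => ?_
    obtain ⟨hm1, hmn⟩ := Finset.mem_Ico.mp hm
    rcases hn.dvd_choose_or hp (2 * m) with h | h | h
    · exact ((Int.natCast_dvd_natCast.mpr h).mul_right _).mul_right _
    · exact ((ih m hmn h).mul_left _).mul_right _
    · rw [← Nat.mul_sub] at h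
      exact (ih (n - m) (by omega) h).mul_left _
  have h2v : (p : ℤ) ∣ 2 * v n := hv n (hp.one_le.trans hpn) ▸ dvd_sub (hc n hpn) hsum
  exact (Int.isCoprime_two_right.mpr ((Int.odd_coe_nat p).mpr hodd)).dvd_of_dvd_mul_left h2v

theorem exists_mem_Icc_dvd_four_mul_sub_three {p : ℕ} (hp : Odd p) :
    ∃ j ∈ Finset.Icc 1 p, (p : ℤ) ∣ 4 * j - 3 := by
  obtain ⟨k, rfl⟩ := hp
  rcases Nat.even_or_odd k with ⟨l, rfl⟩ | ⟨l, rfl⟩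
  · exact ⟨l + 1, Finset.mem_Icc.mpr ⟨by omega, by omega⟩, ⟨1, by push_cast; ring⟩⟩
  · exact ⟨3 * l + 3, Finset.mem_Icc.mpr ⟨by omega, by omega⟩, ⟨3, by push_cast; ring⟩⟩

theorem dvd_Pi3_s11 {p n : ℕ} (hp : Odd p) (hpn : p ≤ n) : (p : ℤ) ∣ Pi3 n := by
  obtain ⟨j, hj, hdvd⟩ := exists_mem_Icc_dvd_four_mul_sub_three hp
  exact (hdvd.trans (dvd_pow_self _ two_ne_zero)).trans
    (Finset.dvd_prod_of_mem _ (Finset.Icc_subset_Icc_right hpn hj))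

theorem romik_v_small_divisibility_general
    (p : ℕ) (hp : p.Prime) (hodd : p ≠ 2)
    (v : ℕ → ℤ)
    (hv : ∀ n : ℕ, 1 ≤ n →
      2 * v n = 2 ^ n * Pi3 n - ∑ m ∈ Finset.Ico 1 n,
        ((2 * n).choose (2 * m) : ℤ) * v m * v (n - m)) :
    (∀ a b : ℕ, 1 ≤ a → a ≤ (p - 1) / 2 → b ≤ a - 1 →
      (p : ℤ) ∣ v (a * p + b)) ∧
    (∀ a b : ℕ, 1 ≤ a → a ≤ (p - 1) / 2 → b ≤ a - 1 →
      (p : ℤ) ∣ v (a * p + (p + 1) / 2 + b)) := by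
  have hp_odd := hp.odd_of_ne_two hodd
  have hv_dvd := dvd_of_lowDigitLt hp hp_odd
    (fun n hn => (dvd_Pi3_s11 hp_odd hn).mul_left (2 ^ n)) hv
  obtain ⟨r, rfl⟩ := hp_odd
  refine ⟨fun a b ha har hb => hv_dvd _ ?_, fun a b ha har hb => hv_dvd _ ?_⟩
  · exact LowDigitLt.of_eq (A := 2 * a) (B := 2 * b) (by ring) (by omega) (by omega)
  · refine LowDigitLt.of_eq (A := 2 * a + 1) (B := 2 * b + 1) ?_ (by omega) (by omega)
    rw [show (2 * r + 1 + 1) / 2 = r + 1 by omega]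
    ring

theorem romik_v_small_divisibility
    (p : ℕ) (hp : p.Prime) (hodd : p ≠ 2)
    (v : ℕ → ℤ)
    (hv0 : v 0 = 1)
    (hv : ∀ n : ℕ, 1 ≤ n →
      2 * v n = 2 ^ n * Pi3 n - ∑ m ∈ Finset.Ico 1 n,
        ((2 * n).choose (2 * m) : ℤ) * v m * v (n - m)) :
    (∀ a b : ℕ, 1 ≤ a → a ≤ (p - 1) / 2 → b ≤ a - 1 →
      (p : ℤ) ∣ v (a * p + b)) ∧
    (∀ a b : ℕ, 1 ≤ a → a ≤ (p - 1) / 2 → b ≤ a - 1 →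
      (p : ℤ) ∣ v (a * p + (p + 1) / 2 + b)) :=
  romik_v_small_divisibility_general p hp hodd v hv
end

section
/- Let y : ℕ → ℤ be a sequence of integers with y(0) = 1. Then for every fixed n ≥ 0 and every positive integer e, the sequence k ↦ R^{−1}_y(k + 2n, k) is purely periodic modulo 2^e with (not necessarily minimal) period length 2^e; that is, for every k ≥ 0, R^{−1}_y(k + 2^e + 2n, k + 2^e) − R^{−1}_y(k + 2n, k) ∈ 2^e·ℤ. -/
/-!
Write `f = U_y(t)/t` and `g = f⁻¹`. For `M ≠ 0` the identity
`Σ_{i+j=M} (k+i) [t^i] f^k [t^j] g^(k+M) = 0` (a form of Lagrange inversion) says that the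
matrix `R⁻¹_y` is inverse to `R_y(k+2m, k) = 2^m (k+2m)!/k! [t^(2m)] f^k`. Hence the band
`T(n, k) = R⁻¹_y(k+2n, k)` satisfies `T(0, k) = 1` and
`T(n, k) = -Σ_{m=1}^{n} T(n-m, k+2m) R_y(k+2m, k)`, so it suffices to show that every
`R_y(k+2m, k)` is an integer which, modulo `2^e`, is `2^e`-periodic in `k`.

Expanding `f^k = (1 + (f - 1))^k` gives
`R_y(k+2m, k) = Σ_{i ≤ m} 2^m C(k+2m, 2m+i) c(m, i)`, where `c(m, i)` is a coefficient of the
exponential generating function `(U_y(t) - t)^i / i!`, hence an integer. Since `2^e` divides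
`2^m C(2^e, j)` whenever `0 < j < 2^(m+1)` and `2m + i ≤ 3m < 2^(m+1)`, Vandermonde's identity
gives `2^m C(a + 2^e, 2m+i) ≡ 2^m C(a, 2m+i) (mod 2^e)`.
-/

/-- The power series `U_y(t)/t`, where `U_y(t) = Σ_{j≥0} y(j) t^{2j+1}/(2j+1)!`;
its constant coefficient is `y(0)`. -/
noncomputable def UdivT (y : ℕ → ℤ) : PowerSeries ℚ :=
  PowerSeries.mk fun j => if j % 2 = 0 then (y (j / 2) : ℚ) / (Nat.factorial (j + 1) : ℚ) else 0

/-- `R⁻¹_y(n,k) = 2^{⌊(n−k)/2⌋}·(n−1)!/(k−1)!·[t^{n−k}] (U_y(t)/t)^{−n}` for `n, k ≥ 1`,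
with `R⁻¹_y(0,0) = 1` and `R⁻¹_y(n,0) = 0` for `n ≥ 1`. -/
noncomputable def RinvQ (y : ℕ → ℤ) (n k : ℕ) : ℚ :=
  if k = 0 then (if n = 0 then 1 else 0)
  else 2 ^ ((n - k) / 2) * (Nat.factorial (n - 1) : ℚ) / (Nat.factorial (k - 1) : ℚ) *
    PowerSeries.coeff (n - k) (((UdivT y)⁻¹) ^ n)

open PowerSeries Finset
open scoped Nat

def HasIntegralEGF (f : ℚ⟦X⟧) : Prop :=
  ∀ n, (n ! : ℚ) * coeff n f ∈ (⊥ : Subring ℚ)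

lemma hasIntegralEGF_one : HasIntegralEGF 1 := fun n => by
  rw [coeff_one]
  split_ifs <;> simp

lemma hasIntegralEGF_X : HasIntegralEGF X := fun n => by
  rw [coeff_X]
  split_ifs <;> simp

lemma factorial_mul_coeff_mul (f g : ℚ⟦X⟧) (n : ℕ) :
    (n ! : ℚ) * coeff n (f * g) = ∑ p ∈ antidiagonal n,
      (n.choose p.1 : ℚ) * ((p.1 ! : ℚ) * coeff p.1 f) * ((p.2 ! : ℚ) * coeff p.2 g) := by
  rw [coeff_mul, mul_sum]
  refine sum_congr rfl fun p hp => ?_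
  rw [← mem_antidiagonal.mp hp, ← Nat.add_choose_mul_factorial_mul_factorial,
    Nat.choose_symm_add]
  push_cast
  ring

lemma factorial_mul_coeff_derivative (f : ℚ⟦X⟧) (n : ℕ) :
    (n ! : ℚ) * coeff n (d⁄dX ℚ f) = ((n + 1)! : ℚ) * coeff (n + 1) f := by
  rw [coeff_derivative, Nat.factorial_succ]
  push_cast
  ring

namespace HasIntegralEGF

variable {f g : ℚ⟦X⟧}

lemma sub (hf : HasIntegralEGF f) (hg : HasIntegralEGF g) : HasIntegralEGF (f - g) := fun n => by
  rw [map_sub, mul_sub]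
  exact sub_mem (hf n) (hg n)

lemma mul (hf : HasIntegralEGF f) (hg : HasIntegralEGF g) : HasIntegralEGF (f * g) := fun n => by
  rw [factorial_mul_coeff_mul]
  exact sum_mem fun p _ => mul_mem (mul_mem (natCast_mem _ _) (hf _)) (hg _)

lemma derivative (h : HasIntegralEGF f) : HasIntegralEGF (d⁄dX ℚ f) := fun n => by
  simpa only [factorial_mul_coeff_derivative] using h (n + 1)

lemma of_derivative (h0 : constantCoeff f ∈ (⊥ : Subring ℚ))
    (h : HasIntegralEGF (d⁄dX ℚ f)) : HasIntegralEGF f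
  | 0 => by simpa using h0
  | n + 1 => by simpa only [factorial_mul_coeff_derivative] using h n

lemma smul_pow (h : HasIntegralEGF f) (h0 : constantCoeff f = 0) (i : ℕ) :
    HasIntegralEGF ((i ! : ℚ)⁻¹ • f ^ i) := by
  induction i with
  | zero => simpa using hasIntegralEGF_one
  | succ i ih =>
    refine of_derivative (by simp [h0]) ?_
    have hD : d⁄dX ℚ (((i + 1)! : ℚ)⁻¹ • f ^ (i + 1)) =
        ((i ! : ℚ)⁻¹ • f ^ i) * d⁄dX ℚ f := by
      rw [Derivation.map_smul, Derivation.leibniz_pow, Nat.add_sub_cancel, smul_eq_mul,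
        ← Nat.cast_smul_eq_nsmul ℚ, smul_smul, smul_mul_assoc, Nat.factorial_succ, Nat.cast_mul,
        mul_inv, mul_right_comm, inv_mul_cancel₀ (by positivity), one_mul]
    rw [hD]
    exact ih.mul h.derivative

end HasIntegralEGF

lemma three_mul_lt_two_pow_succ (m : ℕ) : 3 * m < 2 ^ (m + 1) := by
  induction m with
  | zero => norm_num
  | succ m ih =>
    have := Nat.one_le_two_pow (n := m)
    rw [pow_succ] at *
    omega

lemma two_pow_dvd_two_pow_mul_choose {e m j : ℕ} (hj0 : j ≠ 0) (hj : j < 2 ^ (m + 1)) :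
    2 ^ e ∣ 2 ^ m * (2 ^ e).choose j := by
  obtain ⟨v, u, hu, rfl⟩ := Nat.exists_eq_pow_mul_and_not_dvd hj0 2 (by norm_num)
  have hu0 : u ≠ 0 := by rintro rfl; simp at hu
  have hv : v ≤ m := Nat.lt_succ_iff.mp <| (Nat.pow_lt_pow_iff_right one_lt_two).mp <|
    (Nat.le_mul_of_pos_right _ (Nat.pos_of_ne_zero hu0)).trans_lt hj
  -- `j * C(2^e, j) = 2^e * C(2^e - 1, j - 1)`, and the odd part `u` of `j` is prime to `2^e`.
  have hmul : 2 ^ e ∣ u * (2 ^ v * (2 ^ e).choose (2 ^ v * u)) := by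
    have h := Nat.add_one_mul_choose_eq (2 ^ e - 1) (2 ^ v * u - 1)
    rw [Nat.sub_add_cancel Nat.one_le_two_pow, Nat.sub_add_cancel (Nat.pos_of_ne_zero hj0)] at h
    exact ⟨_, by rw [h]; ring⟩
  have hcop : Nat.Coprime (2 ^ e) u :=
    Nat.Coprime.pow_left e ((Nat.Prime.coprime_iff_not_dvd Nat.prime_two).mpr hu)
  exact (hcop.dvd_of_dvd_mul_left hmul).trans (Nat.mul_dvd_mul_right (Nat.pow_dvd_pow 2 hv) _)

lemma two_pow_mul_choose_add_two_pow_modEq {e m r : ℕ} (a : ℕ) (hr : r < 2 ^ (m + 1)) :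
    2 ^ m * (a + 2 ^ e).choose r ≡ 2 ^ m * a.choose r [MOD 2 ^ e] := by
  have hsplit : 2 ^ m * (a + 2 ^ e).choose r = ∑ j ∈ range r,
      2 ^ m * (2 ^ e).choose (j + 1) * a.choose (r - (j + 1)) + 2 ^ m * a.choose r := by
    rw [add_comm a, Nat.add_choose_eq, Nat.sum_antidiagonal_eq_sum_range_succ_mk,
      sum_range_succ', mul_add, mul_sum]
    simp [mul_assoc]
  rw [hsplit]
  conv_rhs => rw [← zero_add (2 ^ m * a.choose r)]
  refine Nat.ModEq.add_right _ (Nat.modEq_zero_iff_dvd.mpr (dvd_sum fun j hj => ?_))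
  exact (two_pow_dvd_two_pow_mul_choose j.succ_ne_zero (by simp at hj; omega)).mul_right _

lemma cast_add_choose_mul_factorial_div (k j i : ℕ) :
    ((k + j).choose (j + i) : ℚ) * ((j + i)! / i !) = k.choose i * ((k + j)! / k !) := by
  rcases le_or_gt i k with hik | hik
  · rw [Nat.cast_choose ℚ (by omega : j + i ≤ k + j), Nat.cast_choose ℚ hik,
      show k + j - (j + i) = k - i by omega]
    field_simp
  · rw [Nat.choose_eq_zero_of_lt hik, Nat.choose_eq_zero_of_lt (by omega : k + j < j + i)]
    simp

lemma sum_antidiagonal_two_mul_of_odd {M : Type*} [AddCommMonoid M] (f : ℕ → ℕ → M)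
    (hf : ∀ i j, Odd i → f i j = 0) (n : ℕ) :
    ∑ p ∈ antidiagonal (2 * n), f p.1 p.2 =
      ∑ m ∈ range (n + 1), f (2 * m) (2 * n - 2 * m) := by
  rw [Nat.sum_antidiagonal_eq_sum_range_succ f,
    ← sum_image (f := fun i => f i (2 * n - i)) (g := (2 * ·)) (by simp)]
  refine (sum_subset (fun i hi => ?_) fun i hi hi' => hf _ _ ?_).symm
  · simp only [mem_image, mem_range] at hi ⊢
    omega
  · simp only [mem_image, mem_range, not_exists, not_and] at hi hi'
    exact Nat.not_even_iff_odd.mp fun ⟨j, hj⟩ => hi' j (by omega) (by omega)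

lemma Derivation.map_pow_mul_pow_of_mul_eq_one {R A : Type*} [CommRing R] [CommRing A]
    [Algebra R A] (D : Derivation R A A) {a b : A} (hab : a * b = 1) (k : ℕ) :
    D (a ^ k) * b ^ k = k * (D a * b) := by
  induction k with
  | zero => simp
  | succ k ih =>
    have hk : a ^ k * b ^ k = 1 := by rw [← mul_pow, hab, one_pow]
    rw [pow_succ, D.leibniz, smul_eq_mul, smul_eq_mul]
    push_cast
    linear_combination (b * D a) * hk + (a * b) * ih + (k * D a * b) * hab

lemma Derivation.map_mul_eq_neg_of_mul_eq_one {R A : Type*} [CommRing R] [CommRing A]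
    [Algebra R A] (D : Derivation R A A) {a b : A} (hab : a * b = 1) :
    D b * a = -(D a * b) := by
  have h := D.leibniz a b
  rw [hab, D.map_one_eq_zero, smul_eq_mul, smul_eq_mul] at h
  linear_combination -h

lemma coeff_X_mul_derivative {K : Type*} [CommRing K] (f : K⟦X⟧) (n : ℕ) :
    coeff n (X * d⁄dX K f) = n * coeff n f := by
  cases n with
  | zero => simp
  | succ n => rw [coeff_succ_X_mul, coeff_derivative, mul_comm]; push_cast; ring

theorem sum_antidiagonal_mul_coeff_pow_mul_coeff_pow {K : Type*} [Field K] [CharZero K]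
    {f g : K⟦X⟧} (hfg : f * g = 1) (k : ℕ) {M : ℕ} (hM : M ≠ 0) :
    ∑ p ∈ antidiagonal M, (k + p.1 : K) * coeff p.1 (f ^ k) * coeff p.2 (g ^ (k + M)) = 0 := by
  have hDf := (d⁄dX K).map_pow_mul_pow_of_mul_eq_one hfg k
  have hDg := (d⁄dX K).map_pow_mul_pow_of_mul_eq_one (mul_comm f g ▸ hfg) M
  rw [(d⁄dX K).map_mul_eq_neg_of_mul_eq_one hfg] at hDg
  rw [← map_natCast C] at hDf hDg
  have hfg' : f ^ k * g ^ (k + M) = g ^ M := by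
    rw [pow_add, ← mul_assoc, ← mul_pow, hfg, one_pow, one_mul]
  have hfgM : f ^ M * g ^ M = 1 := by rw [← mul_pow, hfg, one_pow]
  -- `X (f^k)' g^(k+M)` and `X (g^M)'` are the multiples `k` and `-M` of `X f' g g^M`,
  -- while `[t^M] (M φ - X φ') = 0` for every `φ`.
  have key : C (M : K) * ((C (k : K) * f ^ k + X * d⁄dX K (f ^ k)) * g ^ (k + M)) =
      C (k : K) * (C (M : K) * g ^ M - X * d⁄dX K (g ^ M)) := by
    rw [add_mul, mul_assoc (C _), hfg', pow_add]
    linear_combination (C (M : K) * X * g ^ M) * hDf + (C (k : K) * X * g ^ M) * hDg -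
      C (k : K) * X * d⁄dX K (g ^ M) * hfgM
  have h := congrArg (coeff M) key
  rw [coeff_C_mul, coeff_C_mul, map_sub, coeff_C_mul, coeff_X_mul_derivative, sub_self,
    mul_zero, mul_eq_zero] at h
  rw [← h.resolve_left (Nat.cast_ne_zero.mpr hM), coeff_mul]
  refine sum_congr rfl fun p _ => ?_
  rw [map_add, coeff_X_mul_derivative, coeff_C_mul]
  ring

section TriangularRecursion

lemma AddCommGroup.ModEq.sum {ι M : Type*} [AddCommGroup M] {p : M} {s : Finset ι}
    {f g : ι → M} (h : ∀ i ∈ s, f i ≡ g i [PMOD p]) :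
    ∑ i ∈ s, f i ≡ ∑ i ∈ s, g i [PMOD p] := by
  classical
  induction s using Finset.induction_on with
  | empty => simp [AddCommGroup.modEq_refl]
  | insert a s ha ih =>
    rw [sum_insert ha, sum_insert ha]
    exact (h a (mem_insert_self a s)).add (ih fun i hi => h i (mem_insert_of_mem hi))

lemma AddCommGroup.ModEq.mul_of_mem_bot {R : Type*} [CommRing R] {p a b c d : R}
    (hab : a ≡ b [PMOD p]) (hcd : c ≡ d [PMOD p]) (ha : a ∈ (⊥ : Subring R))
    (hd : d ∈ (⊥ : Subring R)) : a * c ≡ b * d [PMOD p] := by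
  obtain ⟨z, rfl⟩ := Subring.mem_bot.mp ha
  obtain ⟨w, rfl⟩ := Subring.mem_bot.mp hd
  have h₁ := (hcd.zsmul (z := z)).of_zsmul
  have h₂ := (hab.zsmul (z := w)).of_zsmul
  simp only [zsmul_eq_mul] at h₁ h₂
  exact h₁.trans (by rwa [mul_comm, mul_comm b])

variable {T S : ℕ → ℕ → ℚ} (hT0 : ∀ k, T 0 k = 1) (hS0 : ∀ k, S 0 k = 1)
  (hTS : ∀ n ≠ 0, ∀ k, ∑ m ∈ range (n + 1), T (n - m) (k + 2 * m) * S m k = 0)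
  (hS : ∀ m k, S m k ∈ (⊥ : Subring ℚ))
include hS0 hTS

lemma eq_neg_sum_of_triangular {n : ℕ} (hn : n ≠ 0) (k : ℕ) :
    T n k = -∑ m ∈ range n, T (n - (m + 1)) (k + 2 * (m + 1)) * S (m + 1) k := by
  have h := hTS n hn k
  rw [sum_range_succ', hS0, mul_one, Nat.sub_zero, mul_zero, add_zero] at h
  linear_combination h

include hT0 hS

lemma mem_bot_of_triangular (n k : ℕ) : T n k ∈ (⊥ : Subring ℚ) := by
  induction n using Nat.strong_induction_on generalizing k with
  | _ n ih =>
    rcases eq_or_ne n 0 with rfl | hn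
    · exact hT0 k ▸ one_mem _
    rw [eq_neg_sum_of_triangular hS0 hTS hn]
    exact neg_mem (sum_mem fun m hm => mul_mem (ih _ (by simp at hm; omega) _) (hS _ _))

lemma modEq_of_triangular {P : ℕ} {q : ℚ} (hSP : ∀ m k, S m k ≡ S m (k + P) [PMOD q])
    (n k : ℕ) : T n k ≡ T n (k + P) [PMOD q] := by
  induction n using Nat.strong_induction_on generalizing k with
  | _ n ih =>
    rcases eq_or_ne n 0 with rfl | hn
    · rw [hT0, hT0]
    rw [eq_neg_sum_of_triangular hS0 hTS hn, eq_neg_sum_of_triangular hS0 hTS hn,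
      AddCommGroup.neg_modEq_neg]
    refine AddCommGroup.ModEq.sum fun m hm => ?_
    rw [show k + P + 2 * (m + 1) = k + 2 * (m + 1) + P by ring]
    exact (ih _ (by simp at hm; omega) _).mul_of_mem_bot (hSP _ _)
      (mem_bot_of_triangular hT0 hS0 hTS hS _ _) (hS _ _)

end TriangularRecursion

section UdivT

variable (y : ℕ → ℤ)

lemma coeff_UdivT (j : ℕ) :
    coeff j (UdivT y) = if j % 2 = 0 then (y (j / 2) : ℚ) / ((j + 1)! : ℚ) else 0 :=
  coeff_mk _ _

lemma rescale_neg_one_UdivT : rescale (-1) (UdivT y) = UdivT y := by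
  ext j
  rw [coeff_rescale, coeff_UdivT]
  split_ifs with h
  · rw [(Nat.even_iff.mpr h).neg_one_pow, one_mul]
  · rw [mul_zero]

lemma coeff_UdivT_pow_of_odd {j : ℕ} (hj : Odd j) (k : ℕ) : coeff j (UdivT y ^ k) = 0 := by
  have h := congrArg (coeff j) (congrArg (· ^ k) (rescale_neg_one_UdivT y))
  rw [← map_pow, coeff_rescale, hj.neg_one_pow, neg_one_mul, neg_eq_iff_add_eq_zero,
    ← two_mul, mul_eq_zero] at h
  exact h.resolve_left two_ne_zero

lemma hasIntegralEGF_X_mul_UdivT : HasIntegralEGF (X * UdivT y)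
  | 0 => by simp
  | j + 1 => by
    rw [coeff_succ_X_mul, coeff_UdivT]
    split_ifs
    · rw [mul_div_cancel₀ _ (by positivity)]
      exact Subring.mem_bot.mpr ⟨_, rfl⟩
    · rw [mul_zero]
      exact zero_mem _

lemma hasIntegralEGF_smul_pow_X_mul_UdivT_sub_X (i : ℕ) :
    HasIntegralEGF ((i ! : ℚ)⁻¹ • (X * UdivT y - X) ^ i) :=
  ((hasIntegralEGF_X_mul_UdivT y).sub hasIntegralEGF_X).smul_pow (by simp) i

variable {y} (hy0 : y 0 = 1)
include hy0

lemma constantCoeff_UdivT : constantCoeff (UdivT y) = 1 := by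
  rw [← coeff_zero_eq_constantCoeff_apply, coeff_UdivT]
  simp [hy0]

lemma UdivT_mul_inv : UdivT y * (UdivT y)⁻¹ = 1 :=
  PowerSeries.mul_inv_cancel _ (by rw [constantCoeff_UdivT hy0]; exact one_ne_zero)

lemma coeff_UdivT_sub_one_pow_of_lt {i j : ℕ} (h : j < 2 * i) :
    coeff j ((UdivT y - 1) ^ i) = 0 := by
  have hX : X ^ 2 ∣ UdivT y - 1 := X_pow_dvd_iff.mpr fun m hm => by
    interval_cases m <;> simp [coeff_UdivT, coeff_one, constantCoeff_UdivT hy0]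
  have hXi := pow_dvd_pow_of_dvd hX i
  rw [← pow_mul] at hXi
  exact X_pow_dvd_iff.mp hXi j h

end UdivT

/-- `RQ y m k` is the entry `(k + 2m, k)` of the inverse of the matrix `R⁻¹_y`
(see `sum_RinvQ_mul_RQ`). -/
noncomputable def RQ (y : ℕ → ℤ) (m k : ℕ) : ℚ :=
  2 ^ m * ((k + 2 * m)! / k ! : ℚ) * coeff (2 * m) (UdivT y ^ k)

section RQ

variable {y : ℕ → ℤ} (hy0 : y 0 = 1)

lemma RQ_zero_right {m : ℕ} (hm : m ≠ 0) : RQ y m 0 = 0 := by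
  simp [RQ, coeff_one, hm]

lemma RinvQ_mul_RQ {k m n : ℕ} (hk : k ≠ 0) (hmn : m ≤ n) :
    RinvQ y (k + 2 * n) (k + 2 * m) * RQ y m k = 2 ^ n * ((k + 2 * n - 1)! / k ! : ℚ) *
      ((k + 2 * m : ℕ) * coeff (2 * m) (UdivT y ^ k) *
        coeff (2 * n - 2 * m) ((UdivT y)⁻¹ ^ (k + 2 * n))) := by
  rw [RinvQ, if_neg (by omega), RQ, show k + 2 * n - (k + 2 * m) = 2 * n - 2 * m by omega,
    show (2 * n - 2 * m) / 2 = n - m by omega,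
    ← Nat.mul_factorial_pred (by omega : k + 2 * m ≠ 0), ← pow_sub_mul_pow 2 hmn]
  push_cast
  field_simp

include hy0

lemma RQ_zero_left (k : ℕ) : RQ y 0 k = 1 := by
  simp [RQ, constantCoeff_UdivT hy0, Nat.factorial_ne_zero]

lemma RinvQ_self (k : ℕ) : RinvQ y k k = 1 := by
  rcases eq_or_ne k 0 with rfl | hk
  · simp [RinvQ]
  rw [RinvQ, if_neg hk, Nat.sub_self, coeff_zero_eq_constantCoeff_apply, map_pow,
    constantCoeff_inv, constantCoeff_UdivT hy0]
  simp [Nat.factorial_ne_zero]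

lemma sum_RinvQ_mul_RQ {n : ℕ} (hn : n ≠ 0) (k : ℕ) :
    ∑ m ∈ range (n + 1), RinvQ y (k + 2 * n) (k + 2 * m) * RQ y m k = 0 := by
  rcases eq_or_ne k 0 with rfl | hk
  · rw [sum_range_succ', sum_eq_zero fun m _ => by rw [RQ_zero_right m.succ_ne_zero, mul_zero]]
    simp [RinvQ, hn]
  have h := sum_antidiagonal_mul_coeff_pow_mul_coeff_pow (UdivT_mul_inv hy0) k
    (M := 2 * n) (by omega)
  rw [sum_antidiagonal_two_mul_of_odd (fun i j => (k + i : ℚ) * coeff i (UdivT y ^ k) *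
    coeff j ((UdivT y)⁻¹ ^ (k + 2 * n))) (fun i j hi => by
      rw [coeff_UdivT_pow_of_odd y hi, mul_zero, zero_mul])] at h
  rw [sum_congr rfl fun m hm => RinvQ_mul_RQ hk (by simp at hm; omega), ← mul_sum]
  push_cast at h ⊢
  rw [h, mul_zero]

lemma RQ_eq_sum (m k : ℕ) : RQ y m k = ∑ i ∈ range (m + 1),
    ((2 ^ m * (k + 2 * m).choose (2 * m + i) : ℕ) : ℚ) *
      ((2 * m + i)! * coeff (2 * m + i) ((i ! : ℚ)⁻¹ • (X * UdivT y - X) ^ i)) := by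
  have hbinom : coeff (2 * m) (UdivT y ^ k) =
      ∑ i ∈ range (m + 1), (k.choose i : ℚ) * coeff (2 * m) ((UdivT y - 1) ^ i) := by
    conv_lhs => rw [← sub_add_cancel (UdivT y) 1, add_pow, map_sum]
    simp only [one_pow, mul_one, ← map_natCast (C (R := ℚ)), coeff_mul_C]
    rw [← eventually_constant_sum (N := k + 1) (n := k + m + 1) (fun i hi => by
        rw [Nat.choose_eq_zero_of_lt (by omega), Nat.cast_zero, mul_zero]) (by omega),
      eventually_constant_sum (N := m + 1) (fun i hi => by
        rw [coeff_UdivT_sub_one_pow_of_lt hy0 (by omega), zero_mul]) (by omega)]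
    exact sum_congr rfl fun i _ => mul_comm _ _
  rw [RQ, hbinom, mul_sum]
  refine sum_congr rfl fun i _ => ?_
  rw [coeff_smul, ← mul_sub_one, mul_pow, coeff_X_pow_mul, smul_eq_mul]
  push_cast
  linear_combination (-(2 ^ m * coeff (2 * m) ((UdivT y - 1) ^ i))) *
    cast_add_choose_mul_factorial_div k (2 * m) i

lemma RQ_mem_bot (m k : ℕ) : RQ y m k ∈ (⊥ : Subring ℚ) := by
  rw [RQ_eq_sum hy0]
  exact sum_mem fun i _ =>
    mul_mem (natCast_mem _ _) (hasIntegralEGF_smul_pow_X_mul_UdivT_sub_X y i _)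

lemma RQ_modEq (e m k : ℕ) : RQ y m k ≡ RQ y m (k + 2 ^ e) [PMOD (2 ^ e : ℚ)] := by
  rw [RQ_eq_sum hy0, RQ_eq_sum hy0]
  refine AddCommGroup.ModEq.sum fun i hi => ?_
  have hr : 2 * m + i < 2 ^ (m + 1) := by
    have := three_mul_lt_two_pow_succ m
    simp only [mem_range] at hi
    omega
  have h := AddCommGroup.natCast_modEq_natCast (M := ℚ) |>.mpr
    (two_pow_mul_choose_add_two_pow_modEq (e := e) (k + 2 * m) hr).symm
  rw [Nat.cast_pow, Nat.cast_ofNat, add_right_comm] at h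
  exact h.mul_of_mem_bot AddCommGroup.modEq_rfl (natCast_mem _ _)
    (hasIntegralEGF_smul_pow_X_mul_UdivT_sub_X y i _)

theorem RinvQ_modEq (e n k : ℕ) :
    RinvQ y (k + 2 * n) k ≡ RinvQ y (k + 2 ^ e + 2 * n) (k + 2 ^ e) [PMOD (2 ^ e : ℚ)] := by
  refine modEq_of_triangular (T := fun n k => RinvQ y (k + 2 * n) k) (fun k => ?_)
    (RQ_zero_left hy0) (fun n hn k => ?_) (RQ_mem_bot hy0) (RQ_modEq hy0 e) n k
  · simpa using RinvQ_self hy0 k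
  · rw [← sum_RinvQ_mul_RQ hy0 hn k]
    refine sum_congr rfl fun m hm => ?_
    simp only [mem_range] at hm
    rw [show k + 2 * m + 2 * (n - m) = k + 2 * n by omega]

end RQ

theorem romik_Rinv_periodic_mod_two_pow_general
    (y : ℕ → ℤ) (hy0 : y 0 = 1) (n : ℕ) (e : ℕ) :
    ∀ k : ℕ, ∃ z : ℤ,
      RinvQ y (k + 2 ^ e + 2 * n) (k + 2 ^ e) - RinvQ y (k + 2 * n) k = 2 ^ e * (z : ℚ) := by
  intro k
  obtain ⟨z, hz⟩ := AddCommGroup.modEq_iff_zsmul'.mp (RinvQ_modEq hy0 e n k)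
  exact ⟨z, by rw [hz, zsmul_eq_mul, mul_comm]⟩

theorem romik_Rinv_periodic_mod_two_pow
    (y : ℕ → ℤ) (hy0 : y 0 = 1) (n : ℕ) (e : ℕ) (he : 1 ≤ e) :
    ∀ k : ℕ, ∃ z : ℤ,
      RinvQ y (k + 2 ^ e + 2 * n) (k + 2 ^ e) - RinvQ y (k + 2 * n) k = 2 ^ e * (z : ℚ) :=
  romik_Rinv_periodic_mod_two_pow_general y hy0 n e
end

section
/- Let n and k be positive integers, and let (c_1, c_2, …, c_n) be a tuple of non-negative integers with Σ_{i=1}^n c_i = k and Σ_{i=1}^n i·c_i = n, which is not equal to any of the three tuples (n, 0, …, 0), (n−2, 1, 0, …, 0), (n−4, 2, 0, …, 0). Then 2^{1 + max{v_2(i) : c_1 < i ≤ n}} divides 2^{n−k}·(2n)!/∏_{i=1}^n ((2i)!)^{c_i}·c_i!, where v_2 denotes the 2-adic valuation. (Note that n ≥ k, so 2^{n−k} is an integer, and the quantity (2n)!/∏_{i=1}^n ((2i)!)^{c_i}·c_i! is an integer, being the number of partitions of a set of size 2n into c_i blocks of size 2i for each i.) -/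
/-!
Write `a = c₁`, `r = n - a = ∑_{i ≥ 2} i cᵢ` and `s₂` for the binary digit sum. By Legendre's
formula `v₂(m!) = m - s₂(m)` the quantity has 2-adic valuation
`v₂ C(n, r) + W - s₂(r)` with `W = ∑_{i ≥ 2} (cᵢ (i - 2 + s₂ i) + s₂ cᵢ)`.

By Kummer's theorem, `v₂(m) ≤ v₂ C(n, r) + log₂ r` for every `a < m ≤ n`: adding `r` to `a`
carries at every position `e` with `log₂ r < e ≤ v₂(m)`, because `(a, a + r]` contains the
multiple `m` of `2^e`. It remains to show `log₂ r + s₂(r) < W`, which follows from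
`r 2^{s₂ r} < 2^W`. Each part satisfies `i cᵢ 2^{s₂(i cᵢ)} ≤ 2^{cᵢ (i - 2 + s₂ i) + s₂ cᵢ}`,
strictly unless `i = 2` and `cᵢ ≤ 2`; together with `s₂` being subadditive and
`r = ∑ i cᵢ ≤ ∏ i cᵢ` (all factors are at least 2), this gives the claim as soon as one part is
strict. The three excluded tuples are exactly those without a strict part.
-/

open Finset
open scoped Nat

def binaryDigitSum (m : ℕ) : ℕ := (Nat.digits 2 m).sum

local notation "s₂" => binaryDigitSum

theorem padicValNat_factorial_add_binaryDigitSum (m : ℕ) : padicValNat 2 m ! + s₂ m = m := by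
  have h := sub_one_mul_padicValNat_factorial (p := 2) m
  have := Nat.digit_sum_le 2 m
  norm_num at h
  unfold binaryDigitSum
  omega

theorem binaryDigitSum_two_mul (m : ℕ) : s₂ (2 * m) = s₂ m := by
  have h := padicValNat_factorial_add_binaryDigitSum (2 * m)
  have := padicValNat_factorial_add_binaryDigitSum m
  rw [padicValNat_factorial_mul] at h
  omega

@[simp]
theorem binaryDigitSum_zero : s₂ 0 = 0 := by simp [binaryDigitSum]

@[simp]
theorem binaryDigitSum_one : s₂ 1 = 1 := by simp [binaryDigitSum]

@[simp]
theorem binaryDigitSum_two : s₂ 2 = 1 := by simp [binaryDigitSum]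

theorem binaryDigitSum_pos {m : ℕ} (hm : m ≠ 0) : 0 < s₂ m := by
  have := padicValNat_factorial_lt_of_ne_zero 2 hm
  have := padicValNat_factorial_add_binaryDigitSum m
  omega

theorem padicValNat_choose_add_binaryDigitSum (a b : ℕ) :
    padicValNat 2 ((a + b).choose b) + s₂ (a + b) = s₂ a + s₂ b := by
  have hchoose : (a + b).choose b ≠ 0 := (Nat.choose_pos (Nat.le_add_left b a)).ne'
  have h := congrArg (padicValNat 2) (Nat.add_choose_mul_factorial_mul_factorial a b)
  rw [padicValNat.mul (mul_ne_zero hchoose (by positivity)) (by positivity),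
    padicValNat.mul hchoose (by positivity)] at h
  have := padicValNat_factorial_add_binaryDigitSum a
  have := padicValNat_factorial_add_binaryDigitSum b
  have := padicValNat_factorial_add_binaryDigitSum (a + b)
  omega

theorem binaryDigitSum_add_le (a b : ℕ) : s₂ (a + b) ≤ s₂ a + s₂ b := by
  have := padicValNat_choose_add_binaryDigitSum a b
  omega

theorem binaryDigitSum_sum_le {ι : Type*} (s : Finset ι) (f : ι → ℕ) :
    s₂ (∑ i ∈ s, f i) ≤ ∑ i ∈ s, s₂ (f i) :=
  le_sum_of_subadditive _ binaryDigitSum_zero.le binaryDigitSum_add_le s f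

theorem binaryDigitSum_mul_le (c m : ℕ) : s₂ (c * m) ≤ c * s₂ m := by
  simpa using binaryDigitSum_sum_le (range c) fun _ => m

theorem two_mul_lt_two_pow {m : ℕ} (hm : 3 ≤ m) : 2 * m < 2 ^ m := by
  induction m, hm using Nat.le_induction with
  | base => norm_num
  | succ m _ ih => rw [pow_succ]; omega

theorem two_mul_le_two_pow (m : ℕ) : 2 * m ≤ 2 ^ m := by
  rcases lt_or_ge m 3 with hm | hm
  · interval_cases m <;> norm_num
  · exact (two_mul_lt_two_pow hm).le

/- This is `i c 2^{s₂(i c)} < 2^{c (i - 2 + s₂ i) + s₂ c}` with `2 c` moved to the left, avoiding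
the truncated subtraction `i - 2`. -/
theorem mul_mul_two_pow_binaryDigitSum_lt_of_three_le {i c : ℕ} (hi : 3 ≤ i) (hc : c ≠ 0) :
    i * c * 2 ^ (s₂ (i * c) + 2 * c) < 2 ^ (i * c + (c * s₂ i + s₂ c)) := by
  have hsize : 4 * (i * c * 2 ^ (2 * c)) < 4 * 2 ^ (i * c + 1) := calc
    4 * (i * c * 2 ^ (2 * c)) = 2 * i * (2 * c) * 2 ^ (2 * c) := by ring
    _ < 2 ^ i * 2 ^ c * 2 ^ (2 * c) := Nat.mul_lt_mul_of_pos_right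
      (Nat.mul_lt_mul_of_lt_of_le (two_mul_lt_two_pow hi) (two_mul_le_two_pow c) (by positivity))
      (by positivity)
    _ = 2 ^ (i + 3 * c) := by rw [← pow_add, ← pow_add]; ring_nf
    _ ≤ 2 ^ (i * c + 3) :=
      Nat.pow_le_pow_right two_pos (by nlinarith [Nat.one_le_iff_ne_zero.2 hc])
    _ = 4 * 2 ^ (i * c + 1) := by ring
  have hdigits : s₂ (i * c) ≤ c * s₂ i := mul_comm i c ▸ binaryDigitSum_mul_le c i
  have := binaryDigitSum_pos hc
  calc i * c * 2 ^ (s₂ (i * c) + 2 * c) ≤ i * c * 2 ^ (2 * c + c * s₂ i) :=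
        Nat.mul_le_mul_left _ (Nat.pow_le_pow_right two_pos (by omega))
    _ = i * c * 2 ^ (2 * c) * 2 ^ (c * s₂ i) := by rw [pow_add]; ring
    _ < 2 ^ (i * c + 1) * 2 ^ (c * s₂ i) := by gcongr; omega
    _ ≤ 2 ^ (i * c + (c * s₂ i + s₂ c)) := by
        rw [← pow_add]; exact Nat.pow_le_pow_right two_pos (by omega)

theorem mul_mul_two_pow_binaryDigitSum_lt {i c : ℕ} (hi : 2 ≤ i) (hc : c ≠ 0)
    (hlarge : 3 ≤ i ∨ 3 ≤ c) :
    i * c * 2 ^ (s₂ (i * c) + 2 * c) < 2 ^ (i * c + (c * s₂ i + s₂ c)) := by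
  rcases hi.eq_or_lt with rfl | hi
  · rw [binaryDigitSum_two_mul, binaryDigitSum_two, mul_one,
      show 2 * c + (c + s₂ c) = c + (s₂ c + 2 * c) by ring, pow_add _ c]
    exact Nat.mul_lt_mul_of_pos_right (two_mul_lt_two_pow (by omega)) (by positivity)
  · exact mul_mul_two_pow_binaryDigitSum_lt_of_three_le hi hc

theorem mul_mul_two_pow_binaryDigitSum_le {i c : ℕ} (hi : 2 ≤ i) (hc : c ≠ 0) :
    i * c * 2 ^ (s₂ (i * c) + 2 * c) ≤ 2 ^ (i * c + (c * s₂ i + s₂ c)) := by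
  by_cases hlarge : 3 ≤ i ∨ 3 ≤ c
  · exact (mul_mul_two_pow_binaryDigitSum_lt hi hc hlarge).le
  · obtain ⟨rfl, hc1, hc2⟩ : i = 2 ∧ 1 ≤ c ∧ c ≤ 2 := by omega
    interval_cases c <;> simp [binaryDigitSum]

theorem sum_le_prod_of_two_le {ι : Type*} {s : Finset ι} {f : ι → ℕ} (hs : s.Nonempty)
    (hf : ∀ i ∈ s, 2 ≤ f i) : ∑ i ∈ s, f i ≤ ∏ i ∈ s, f i := by
  induction hs using Nonempty.cons_induction with
  | singleton a => simp
  | cons a s has hs ih =>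
    rw [sum_cons, prod_cons]
    have ha := hf a (mem_cons_self a s)
    have hle := ih fun i hi => hf i (mem_cons_of_mem hi)
    obtain ⟨b, hb⟩ := hs
    have : 2 ≤ ∑ i ∈ s, f i := (hf b (mem_cons_of_mem hb)).trans (single_le_sum (by simp) hb)
    nlinarith

theorem sum_mul_two_pow_binaryDigitSum_lt {s : Finset ℕ} {c : ℕ → ℕ}
    (hs : ∀ i ∈ s, 2 ≤ i ∧ c i ≠ 0) (hlarge : ∃ i ∈ s, 3 ≤ i ∨ 3 ≤ c i) :
    (∑ i ∈ s, i * c i) * 2 ^ (s₂ (∑ i ∈ s, i * c i) + 2 * ∑ i ∈ s, c i) <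
      2 ^ (∑ i ∈ s, i * c i + ∑ i ∈ s, (c i * s₂ i + s₂ (c i))) := by
  have hpart : ∀ i ∈ s, 2 ≤ i * c i := fun i hi =>
    (hs i hi).1.trans (Nat.le_mul_of_pos_right i (Nat.pos_of_ne_zero (hs i hi).2))
  calc (∑ i ∈ s, i * c i) * 2 ^ (s₂ (∑ i ∈ s, i * c i) + 2 * ∑ i ∈ s, c i)
      ≤ (∏ i ∈ s, i * c i) * 2 ^ (∑ i ∈ s, (s₂ (i * c i) + 2 * c i)) := by
        rw [sum_add_distrib, ← mul_sum]
        obtain ⟨i, hi, -⟩ := hlarge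
        exact Nat.mul_le_mul (sum_le_prod_of_two_le ⟨i, hi⟩ hpart)
          (Nat.pow_le_pow_right two_pos (by gcongr; exact binaryDigitSum_sum_le s _))
    _ = ∏ i ∈ s, i * c i * 2 ^ (s₂ (i * c i) + 2 * c i) := by
        rw [← prod_pow_eq_pow_sum, ← prod_mul_distrib]
    _ < ∏ i ∈ s, 2 ^ (i * c i + (c i * s₂ i + s₂ (c i))) := by
        refine prod_lt_prod
          (fun i hi => Nat.mul_pos (two_pos.trans_le (hpart i hi)) (by positivity)) ?_ ?_
        · exact fun i hi => mul_mul_two_pow_binaryDigitSum_le (hs i hi).1 (hs i hi).2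
        · obtain ⟨i, hi, h⟩ := hlarge
          exact ⟨i, hi, mul_mul_two_pow_binaryDigitSum_lt (hs i hi).1 (hs i hi).2 h⟩
    _ = 2 ^ (∑ i ∈ s, i * c i + ∑ i ∈ s, (c i * s₂ i + s₂ (c i))) := by
        rw [prod_pow_eq_pow_sum, sum_add_distrib]

theorem log_add_binaryDigitSum_add_lt {s : Finset ℕ} {c : ℕ → ℕ} (hs : ∀ i ∈ s, 2 ≤ i)
    (hlarge : ∃ i ∈ s, c i ≠ 0 ∧ (3 ≤ i ∨ 3 ≤ c i)) :
    Nat.log 2 (∑ i ∈ s, i * c i) + (s₂ (∑ i ∈ s, i * c i) + 2 * ∑ i ∈ s, c i) <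
      ∑ i ∈ s, i * c i + ∑ i ∈ s, (c i * s₂ i + s₂ (c i)) := by
  classical
  have hsupp {f : ℕ → ℕ} (hf : ∀ i, c i = 0 → f i = 0) :
      ∑ i ∈ s with c i ≠ 0, f i = ∑ i ∈ s, f i :=
    sum_filter_of_ne fun i _ hfi hci => hfi (hf i hci)
  have h := sum_mul_two_pow_binaryDigitSum_lt (s := {i ∈ s | c i ≠ 0}) (c := c)
    (fun i hi => ⟨hs i (mem_filter.1 hi).1, (mem_filter.1 hi).2⟩)
    (by obtain ⟨i, hi, hci, h⟩ := hlarge; exact ⟨i, mem_filter.2 ⟨hi, hci⟩, h⟩)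
  rw [hsupp (f := fun i => i * c i) (by simp_all), hsupp (f := c) (by simp_all),
    hsupp (f := fun i => c i * s₂ i + s₂ (c i)) (by simp_all)] at h
  obtain ⟨i, hi, hci, -⟩ := hlarge
  have hpos : 0 < i * c i := Nat.mul_pos (by linarith [hs i hi]) (Nat.pos_of_ne_zero hci)
  have hr : ∑ i ∈ s, i * c i ≠ 0 := (sum_pos' (fun _ _ => Nat.zero_le _) ⟨i, hi, hpos⟩).ne'
  rw [← Nat.pow_lt_pow_iff_right one_lt_two, pow_add]
  exact (Nat.mul_le_mul_right _ (Nat.pow_log_le_self 2 hr)).trans_lt h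

theorem le_mod_add_of_dvd {a r m d : ℕ} (hd : d ∣ m) (ham : a < m) (hm : m ≤ a + r) :
    d ≤ a % d + r := by
  obtain ⟨q, rfl⟩ := hd
  have hq : a / d < q := Nat.div_lt_of_lt_mul ham
  have := Nat.div_add_mod a d
  nlinarith

theorem padicValNat_le_padicValNat_choose_add_log {p a r m : ℕ} [hp : Fact p.Prime]
    (ham : a < m) (hm : m ≤ a + r) :
    padicValNat p m ≤ padicValNat p ((a + r).choose r) + Nat.log p r := by
  set b := padicValNat p m + Nat.log p (a + r) + 1
  have hcarries : Ioc (Nat.log p r) (padicValNat p m) ⊆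
      {e ∈ Ico 1 b | p ^ e ≤ r % p ^ e + a % p ^ e} := by
    intro e he
    rw [mem_Ioc] at he
    have hr : r % p ^ e = r := Nat.mod_eq_of_lt (Nat.lt_pow_of_log_lt hp.out.one_lt he.1)
    refine mem_filter.2 ⟨mem_Ico.2 ⟨by omega, by omega⟩, ?_⟩
    rw [hr, add_comm]
    exact le_mod_add_of_dvd ((pow_dvd_pow p he.2).trans pow_padicValNat_dvd) ham hm
  have := card_le_card hcarries
  rw [Nat.card_Ioc, ← padicValNat_choose' (by omega)] at this
  omega

theorem padicValNat_finset_prod {p : ℕ} [hp : Fact p.Prime] {ι : Type*} {s : Finset ι}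
    {f : ι → ℕ} (hf : ∀ i ∈ s, f i ≠ 0) :
    padicValNat p (∏ i ∈ s, f i) = ∑ i ∈ s, padicValNat p (f i) := by
  simp only [← Nat.factorization_def _ hp.out, Nat.factorization_prod hf, Finsupp.finsetSum_apply]

theorem factorial_pow_mul_factorial_dvd_factorial_mul {m : ℕ} (hm : m ≠ 0) (c : ℕ) :
    m ! ^ c * c ! ∣ (c * m)! :=
  ⟨c.uniformBell m, by rw [← Nat.uniformBell_mul_eq c hm]; ring⟩

theorem prod_factorial_two_mul_pow_mul_factorial_dvd {s : Finset ℕ} {c : ℕ → ℕ} {n : ℕ}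
    (hs : 0 ∉ s) (hwt : ∑ i ∈ s, i * c i = n) :
    ∏ i ∈ s, (2 * i)! ^ c i * (c i)! ∣ (2 * n)! := by
  have hsum : ∑ i ∈ s, c i * (2 * i) = 2 * n := by
    rw [← hwt, mul_sum]; exact sum_congr rfl fun i _ => by ring
  exact hsum ▸ (prod_dvd_prod_of_dvd _ _ fun i hi => factorial_pow_mul_factorial_dvd_factorial_mul
    (mul_ne_zero two_ne_zero (ne_of_mem_of_not_mem hi hs)) (c i)).trans
    (Nat.prod_factorial_dvd_factorial_sum s _)

theorem padicValNat_prod_factorial_two_mul_pow_mul_factorial_add (s : Finset ℕ) (c : ℕ → ℕ) :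
    padicValNat 2 (∏ i ∈ s, (2 * i)! ^ c i * (c i)!) + ∑ i ∈ s, (c i * s₂ i + s₂ (c i)) =
      2 * ∑ i ∈ s, i * c i + ∑ i ∈ s, c i := by
  rw [padicValNat_finset_prod fun i _ => by positivity, ← sum_add_distrib, mul_sum,
    ← sum_add_distrib]
  refine sum_congr rfl fun i _ => ?_
  rw [padicValNat.mul (by positivity) (by positivity), padicValNat.pow]
  have h := padicValNat_factorial_add_binaryDigitSum (2 * i)
  have := padicValNat_factorial_add_binaryDigitSum (c i)
  rw [binaryDigitSum_two_mul] at h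
  nlinarith

theorem padicValNat_two_pow_mul_factorial_div_prod_add {s : Finset ℕ} {c : ℕ → ℕ} {n k : ℕ}
    (hs : 0 ∉ s) (hsum : ∑ i ∈ s, c i = k) (hwt : ∑ i ∈ s, i * c i = n) :
    padicValNat 2 (2 ^ (n - k) * ((2 * n)! / ∏ i ∈ s, (2 * i)! ^ c i * (c i)!)) + s₂ n + 2 * k =
      n + ∑ i ∈ s, (c i * s₂ i + s₂ (c i)) := by
  have hkn : k ≤ n := hsum ▸ hwt ▸ sum_le_sum fun i hi =>
    Nat.le_mul_of_pos_left _ (Nat.pos_of_ne_zero (ne_of_mem_of_not_mem hi hs))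
  have hD := padicValNat_prod_factorial_two_mul_pow_mul_factorial_add s c
  obtain ⟨Q, hQ⟩ := prod_factorial_two_mul_pow_mul_factorial_dvd hs hwt
  have hQ0 : Q ≠ 0 := right_ne_zero_of_mul (hQ ▸ Nat.factorial_ne_zero _)
  have h2n := padicValNat_factorial_add_binaryDigitSum (2 * n)
  rw [binaryDigitSum_two_mul, hQ, padicValNat.mul (by positivity) hQ0] at h2n
  rw [hQ, Nat.mul_div_cancel_left _ (by positivity), padicValNat.mul (by positivity) hQ0,
    padicValNat.prime_pow]
  omega

theorem sum_Icc_one_eq_add {M : Type*} [AddCommMonoid M] {n : ℕ} (hn : 0 < n) (f : ℕ → M) :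
    ∑ i ∈ Icc 1 n, f i = f 1 + ∑ i ∈ Icc 2 n, f i := by
  rw [← insert_Icc_add_one_left_eq_Icc hn, sum_insert (by simp)]
  rfl

theorem eq_exceptional_of_small_parts {n : ℕ} {c : ℕ → ℕ} (hn : 0 < n)
    (hwt : ∑ i ∈ Icc 1 n, i * c i = n)
    (hsmall : ∀ i ∈ Icc 2 n, c i ≠ 0 → i = 2 ∧ c i ≤ 2) :
    ∃ m ≤ 2, ∀ i ∈ Icc 1 n, c i = if i = 1 then n - 2 * m else if i = 2 then m else 0 := by
  rw [sum_Icc_one_eq_add hn, one_mul] at hwt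
  have hvanish : ∀ i ∈ Icc 2 n, i ≠ 2 → c i = 0 := fun i hi h2 => by
    by_contra h
    exact h2 (hsmall i hi h).1
  obtain ⟨m, hm, hc1, hc2⟩ : ∃ m ≤ 2, c 1 = n - 2 * m ∧ (2 ≤ n → c 2 = m) := by
    by_cases h2n : 2 ≤ n
    · have h2 : 2 ∈ Icc 2 n := mem_Icc.2 ⟨le_rfl, h2n⟩
      rw [sum_eq_single_of_mem 2 h2 fun i hi h => by rw [hvanish i hi h, mul_zero]] at hwt
      refine ⟨c 2, ?_, by omega, fun _ => rfl⟩
      by_cases h : c 2 = 0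
      · omega
      · exact (hsmall 2 h2 h).2
    · rw [Icc_eq_empty (by omega), sum_empty] at hwt
      exact ⟨0, by omega, by omega, by omega⟩
  refine ⟨m, hm, fun i hi => ?_⟩
  rw [mem_Icc] at hi
  rcases (by omega : i = 1 ∨ i = 2 ∨ 3 ≤ i) with rfl | rfl | hi3
  · simp [hc1]
  · simp [hc2 hi.2]
  · rw [if_neg (by omega), if_neg (by omega)]
    exact hvanish i (mem_Icc.2 ⟨by omega, hi.2⟩) (by omega)

theorem exists_large_part {n : ℕ} {c : ℕ → ℕ} (hn : 0 < n)
    (hwt : ∑ i ∈ Icc 1 n, i * c i = n)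
    (hexc1 : ¬ (∀ i ∈ Icc 1 n, c i = if i = 1 then n else 0))
    (hexc2 : ¬ (∀ i ∈ Icc 1 n, c i = if i = 1 then n - 2 else if i = 2 then 1 else 0))
    (hexc3 : ¬ (∀ i ∈ Icc 1 n, c i = if i = 1 then n - 4 else if i = 2 then 2 else 0)) :
    ∃ i ∈ Icc 2 n, c i ≠ 0 ∧ (3 ≤ i ∨ 3 ≤ c i) := by
  by_contra! hsmall
  obtain ⟨m, hm, hc⟩ := eq_exceptional_of_small_parts hn hwt fun i hi h => by
    have := hsmall i hi h
    have := (mem_Icc.1 hi).1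
    omega
  interval_cases m
  · exact hexc1 (by simpa using hc)
  · exact hexc2 (by simpa using hc)
  · exact hexc3 (by simpa using hc)

theorem sup_padicValNat_Ioc_lt_padicValNat {n k : ℕ} {c : ℕ → ℕ} (hn : 0 < n)
    (hsum : ∑ i ∈ Icc 1 n, c i = k) (hwt : ∑ i ∈ Icc 1 n, i * c i = n)
    (hlarge : ∃ i ∈ Icc 2 n, c i ≠ 0 ∧ (3 ≤ i ∨ 3 ≤ c i)) :
    (Ioc (c 1) n).sup (fun i => padicValNat 2 i) <
      padicValNat 2 (2 ^ (n - k) * ((2 * n)! / ∏ i ∈ Icc 1 n, (2 * i)! ^ c i * (c i)!)) := by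
  have hval := padicValNat_two_pow_mul_factorial_div_prod_add (by simp) hsum hwt
  have hcomb := log_add_binaryDigitSum_add_lt (fun i hi => (mem_Icc.1 hi).1) hlarge
  set r := ∑ i ∈ Icc 2 n, i * c i
  rw [sum_Icc_one_eq_add hn, one_mul] at hwt
  rw [sum_Icc_one_eq_add hn] at hsum
  rw [sum_Icc_one_eq_add hn, binaryDigitSum_one] at hval
  have hcarry := padicValNat_choose_add_binaryDigitSum (c 1) r
  have hsn : s₂ (c 1 + r) = s₂ n := by rw [hwt]
  refine (Finset.sup_lt_iff (by simp; omega)).2 fun m hm => ?_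
  have := padicValNat_le_padicValNat_choose_add_log (p := 2) (r := r) (mem_Ioc.1 hm).1
    (hwt ▸ (mem_Ioc.1 hm).2)
  omega

theorem romik_two_adic_multinomial_bound_general
    (n k : ℕ) (hn : 0 < n)
    (c : ℕ → ℕ)
    (hsum : ∑ i ∈ Finset.Icc 1 n, c i = k)
    (hwt : ∑ i ∈ Finset.Icc 1 n, i * c i = n)
    (hexc1 : ¬ (∀ i ∈ Finset.Icc 1 n, c i = if i = 1 then n else 0))
    (hexc2 : ¬ (∀ i ∈ Finset.Icc 1 n,
      c i = if i = 1 then n - 2 else if i = 2 then 1 else 0))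
    (hexc3 : ¬ (∀ i ∈ Finset.Icc 1 n,
      c i = if i = 1 then n - 4 else if i = 2 then 2 else 0)) :
    ∃ z : ℤ,
      (2 : ℚ) ^ (n - k) * (Nat.factorial (2 * n) : ℚ) /
          (∏ i ∈ Finset.Icc 1 n, (Nat.factorial (2 * i) : ℚ) ^ (c i) * (Nat.factorial (c i) : ℚ))
        = 2 ^ (1 + (Finset.Ioc (c 1) n).sup (fun i => padicValNat 2 i)) * (z : ℚ) := by
  have hlt := sup_padicValNat_Ioc_lt_padicValNat hn hsum hwt
    (exists_large_part hn hwt hexc1 hexc2 hexc3)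
  obtain ⟨z, hz⟩ := (padicValNat_dvd_iff (1 + _) _).2 (Or.inr (Nat.one_add_le_iff.2 hlt))
  refine ⟨z, ?_⟩
  have hD := prod_factorial_two_mul_pow_mul_factorial_dvd (by simp) hwt
  have := congrArg (Nat.cast : ℕ → ℚ) hz
  push_cast [Nat.cast_div (K := ℚ) hD (by positivity)] at this
  rw [mul_div_assoc]
  exact_mod_cast this

theorem romik_two_adic_multinomial_bound
    (n k : ℕ) (hn : 0 < n) (hk : 0 < k)
    (c : ℕ → ℕ)
    (hsum : ∑ i ∈ Finset.Icc 1 n, c i = k)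
    (hwt : ∑ i ∈ Finset.Icc 1 n, i * c i = n)
    (hexc1 : ¬ (∀ i ∈ Finset.Icc 1 n, c i = if i = 1 then n else 0))
    (hexc2 : ¬ (∀ i ∈ Finset.Icc 1 n,
      c i = if i = 1 then n - 2 else if i = 2 then 1 else 0))
    (hexc3 : ¬ (∀ i ∈ Finset.Icc 1 n,
      c i = if i = 1 then n - 4 else if i = 2 then 2 else 0)) :
    ∃ z : ℤ,
      (2 : ℚ) ^ (n - k) * (Nat.factorial (2 * n) : ℚ) /
          (∏ i ∈ Finset.Icc 1 n, (Nat.factorial (2 * i) : ℚ) ^ (c i) * (Nat.factorial (c i) : ℚ))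
        = 2 ^ (1 + (Finset.Ioc (c 1) n).sup (fun i => padicValNat 2 i)) * (z : ℚ) :=
  romik_two_adic_multinomial_bound_general n k hn c hsum hwt hexc1 hexc2 hexc3
end
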